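/- arXiv:math/0005067 — 5 statements merged into one kernel-verified Lean document; each statement's English description precedes it below -/
import Mathlib

section
/- Let (Ω,T) be a subshift over a finite alphabet A with associated set of words W. Then the following are equivalent: (i) (Ω,T) satisfies (HP), i.e. there exists N > 0 such that for every nonempty v, v^k ∈ W implies k ≤ N; (ii) there exists κ > 0 such that for every nonempty v ∈ W, every return word z of v satisfies |z| ≥ |v|/κ. -/
open Filter Topology

namespace SubshiftErgodic

variable {A : Type*}

/-- The shift map `T` on two-sided sequences over `A`: `(T ω) n = ω (n+1)`. -/
def shift (ω : ℤ → A) : ℤ → A := fun n => ω (n + 1)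

/-- The `n`-th power of the shift: `(shiftZ n ω) k = ω (k + n)`. -/
def shiftZ (n : ℤ) (ω : ℤ → A) : ℤ → A := fun k => ω (k + n)

/-- `Ω` is a subshift: a closed, shift-invariant subset of `A^ℤ`. -/
def IsSubshift [TopologicalSpace A] (Ω : Set (ℤ → A)) : Prop :=
  IsClosed Ω ∧ shift '' Ω = Ω

/-- Minimality: every orbit `{T^n ω : n ∈ ℤ}` is dense in `Ω`. -/
def IsMinimal [TopologicalSpace A] (Ω : Set (ℤ → A)) : Prop :=
  ∀ ω ∈ Ω, Ω ⊆ closure {ρ | ∃ n : ℤ, ρ = shiftZ n ω}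

/-- The finite word `w` occurs in the sequence `ω` at position `k`. -/
def OccursAt (w : List A) (ω : ℤ → A) (k : ℤ) : Prop :=
  ∀ i : Fin w.length, ω (k + (i : ℕ)) = w.get i

/-- The set `W = W(Ω)` of finite words occurring as factors of elements of `Ω`. -/
def words (Ω : Set (ℤ → A)) : Set (List A) :=
  {w | ∃ ω ∈ Ω, ∃ k : ℤ, OccursAt w ω k}

/-- `v` occurs as a factor of the finite word `w` at position `i`. -/
def OccursIn (v w : List A) (i : ℕ) : Prop :=
  i + v.length ≤ w.length ∧ v <+: w.drop i

/-- `♯_v(w)`: the number of occurrences of `v` as a factor of `w`. -/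
noncomputable def occ (v w : List A) : ℕ :=
  {i : ℕ | OccursIn v w i}.ncard

/-- `z` is a return word of `u` (relative to the set of words `W`). -/
def IsReturnWord (W : Set (List A)) (z u : List A) : Prop :=
  z ∈ W ∧ z ++ u ∈ W ∧ occ u (z ++ u) = 2 ∧ u <+: z ++ u

/-- The maximal number of pairwise disjoint occurrences of `v` as a factor of `w`. -/
noncomputable def maxDisjoint (v w : List A) : ℕ :=
  sSup {m : ℕ | ∃ s : Fin m → ℕ, (∀ i, OccursIn v w (s i)) ∧
    ∀ i j : Fin m, i < j → s i + v.length ≤ s j}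

/-- The filter expressing `|w| → ∞` along words `w ∈ W`. -/
def wordsFilter (W : Set (List A)) : Filter (List A) :=
  ⨅ L : ℕ, Filter.principal {w | w ∈ W ∧ L ≤ w.length}

/-- `lim_{|w| → ∞} g w = x` over `w ∈ W`: for every `ε > 0` there is `L` with
`‖g w - x‖ ≤ ε` for all `w ∈ W` with `|w| ≥ L`. -/
def TendstoWords {B : Type*} [SeminormedAddCommGroup B] (W : Set (List A))
    (g : List A → B) (x : B) : Prop :=
  ∀ ε : ℝ, 0 < ε → ∃ L : ℕ, ∀ w ∈ W, L ≤ w.length → ‖g w - x‖ ≤ ε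

/-- `liminf_{|w| → ∞} g w` over `w ∈ W`, valued in the extended reals. -/
noncomputable def liminfWords (W : Set (List A)) (g : List A → ℝ) : EReal :=
  Filter.liminf (fun w => (g w : EReal)) (wordsFilter W)

/-- `limsup_{|w| → ∞} g w` over `w ∈ W`, valued in the extended reals. -/
noncomputable def limsupWords (W : Set (List A)) (g : List A → ℝ) : EReal :=
  Filter.limsup (fun w => (g w : EReal)) (wordsFilter W)

/-- `ν(v) = liminf_{|w| → ∞} l_v(w)/|w|`, where
`l_v(w) = (max number of pairwise disjoint copies of v in w) ⬝ |v|`. -/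
noncomputable def nu (W : Set (List A)) (v : List A) : EReal :=
  liminfWords W (fun w => ((maxDisjoint v w * v.length : ℕ) : ℝ) / (w.length : ℝ))

/-- Condition (PQ): uniform positivity of quasiweights. -/
def PQ (W : Set (List A)) : Prop :=
  ∃ C : ℝ, 0 < C ∧ ∀ v ∈ W, v ≠ [] → (C : EReal) ≤ nu W v

/-- Unique ergodicity: all word frequencies `♯_v(w)/|w|` converge as `|w| → ∞`. -/
def UniquelyErgodic (Ω : Set (ℤ → A)) : Prop :=
  ∀ v ∈ words Ω, ∃ x : ℝ,
    TendstoWords (words Ω) (fun w => (occ v w : ℝ) / (w.length : ℝ)) x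

/-- `F : W → ℝ` is subadditive. -/
def IsSubadditive (W : Set (List A)) (F : List A → ℝ) : Prop :=
  ∀ a b : List A, a ∈ W → b ∈ W → a ++ b ∈ W → F (a ++ b) ≤ F a + F b

/-- `F^(n) = max { F v / |v| : v ∈ W, |v| = n }`. -/
noncomputable def wordSup (W : Set (List A)) (F : List A → ℝ) (n : ℕ) : ℝ :=
  sSup ((fun v => F v / (v.length : ℝ)) '' {v | v ∈ W ∧ v.length = n})

/-- Condition (SET): the uniform subadditive ergodic theorem holds, i.e. for every
subadditive `F` the limit `lim_{|w|→∞} F(w)/|w|` exists and equals `inf_{n ≥ 1} F^(n)`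
(in the extended reals). -/
def SET (W : Set (List A)) : Prop :=
  ∀ F : List A → ℝ, IsSubadditive W F →
    Filter.Tendsto (fun w => ((F w / (w.length : ℝ) : ℝ) : EReal)) (wordsFilter W)
      (nhds (⨅ n : {n : ℕ // 1 ≤ n}, ((wordSup W F n.1 : ℝ) : EReal)))

/-- A Banach-space-valued function `F : W → B` is additive. -/
def IsAdditive {B : Type*} [SeminormedAddCommGroup B] (W : Set (List A))
    (F : List A → B) : Prop :=
  ∃ D : ℝ, 0 < D ∧ ∃ c : ℕ → ℝ, Antitone c ∧ (∀ n, 0 ≤ c n) ∧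
    Filter.Tendsto c Filter.atTop (nhds 0) ∧
    (∀ vs : List (List A), (∀ v ∈ vs, v ∈ W) → vs.flatten ∈ W →
      ‖F vs.flatten - (vs.map F).sum‖ ≤ (vs.map fun v => c v.length * (v.length : ℝ)).sum) ∧
    ∀ v ∈ W, ‖F v‖ ≤ D * (v.length : ℝ)

/-- Condition (HP): powers in `W` have uniformly bounded exponent. -/
def HP (W : Set (List A)) : Prop :=
  ∃ N : ℕ, 0 < N ∧ ∀ v : List A, v ≠ [] → ∀ k : ℕ,
    (List.replicate k v).flatten ∈ W → k ≤ N

/-- Condition (PW): uniform positivity of weights. -/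
def PW (W : Set (List A)) : Prop :=
  ∃ E : ℝ, 0 < E ∧ ∀ v ∈ W, v ≠ [] →
    (E : EReal) ≤ liminfWords W (fun w => ((occ v w * v.length : ℕ) : ℝ) / (w.length : ℝ))

/-- Linear repetitivity. -/
def LinearlyRepetitive (W : Set (List A)) : Prop :=
  ∃ D : ℝ, 0 < D ∧ ∀ v ∈ W, v ≠ [] → ∀ w ∈ W, D * (v.length : ℝ) ≤ (w.length : ℝ) →
    v <:+: w

/-- Aperiodicity: no element of `Ω` is periodic. -/
def Aperiodic (Ω : Set (ℤ → A)) : Prop :=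
  ∀ ω ∈ Ω, ∀ p : ℕ, 1 ≤ p → shiftZ (p : ℤ) ω ≠ ω

/-- `m(n)`: the minimal length of a return word of a word of length `n` in `W`. -/
noncomputable def mRet (W : Set (List A)) (n : ℕ) : ℕ :=
  sInf {k : ℕ | ∃ v z : List A, v ∈ W ∧ v.length = n ∧ IsReturnWord W z v ∧ z.length = k}

/-- `k_ω^w`: the minimal nonnegative position at which `w` occurs in `ω`. -/
noncomputable def firstOcc (ω : ℤ → A) (w : List A) : ℕ :=
  sInf {k : ℕ | OccursAt w ω (k : ℤ)}

/-- `F_ω(w) = ∑_{j=0}^{|w|-1} f(T^{k_ω^w + j} ω)`. -/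
noncomputable def birkhoffF {B : Type*} [AddCommMonoid B] (f : (ℤ → A) → B)
    (ω : ℤ → A) (w : List A) : B :=
  ∑ j ∈ Finset.range w.length, f (shiftZ ((firstOcc ω w : ℤ) + (j : ℤ)) ω)


/-- Factor closure: a factor of a word of `Ω` is a word of `Ω`. -/
lemma mem_words_of_occursIn {Ω : Set (ℤ → A)} {w u : List A} {i : ℕ}
    (hw : w ∈ words Ω) (h : OccursIn u w i) : u ∈ words Ω := by
  obtain ⟨ω, hω, k, hk⟩ := hw
  refine ⟨ω, hω, k + (i : ℤ), ?_⟩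
  intro j
  have hj : i + (j : ℕ) < w.length := by
    have h1 := h.1
    have h2 := j.isLt
    omega
  have e1 : u.get j = w[i + (j : ℕ)]'hj := by
    rw [List.get_eq_getElem, h.2.getElem j.isLt, List.getElem_drop]
  have e2 := hk ⟨i + (j : ℕ), hj⟩
  rw [List.get_eq_getElem] at e2
  rw [e1, ← e2]
  congr 1
  push_cast
  ring

lemma occ_self (v : List A) : occ v v = 1 := by
  have hset : {i : ℕ | OccursIn v v i} = {0} := by
    ext i
    simp only [Set.mem_setOf_eq, Set.mem_singleton_iff]
    constructor
    · rintro ⟨h1, _⟩; omega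
    · rintro rfl
      exact ⟨by omega, by simpa using List.prefix_refl v⟩
  rw [occ, hset, Set.ncard_singleton]

/-- From two occurrences of `u` in a word of `Ω`, one gets a return word of `u`
whose length is at most the distance between the two occurrences. -/
lemma exists_return_word {Ω : Set (ℤ → A)} {w u : List A} {a b : ℕ}
    (hw : w ∈ words Ω) (hab : a < b) (ha : OccursIn u w a) (hb : OccursIn u w b) :
    ∃ z : List A, IsReturnWord (words Ω) z u ∧ z.length ≤ b - a := by
  set S : Set ℕ := {i | a < i ∧ OccursIn u w i} with hS
  have hbS : b ∈ S := ⟨hab, hb⟩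
  set c := sInf S with hcdef
  have hcS : c ∈ S := Nat.sInf_mem ⟨b, hbS⟩
  have hac : a < c := hcS.1
  have hcb : c ≤ b := Nat.sInf_le hbS
  have hcw : c + u.length ≤ w.length := hcS.2.1
  set z : List A := (w.drop a).take (c - a) with hzdef
  have hzlen : z.length = c - a := by
    rw [hzdef, List.length_take, List.length_drop]
    omega
  have hdropc : (w.drop a).drop (c - a) = w.drop c := by
    rw [List.drop_drop]
    congr 1
    omega
  have hu_take : (w.drop c).take u.length = u := (List.prefix_iff_eq_take.mp hcS.2.2).symm
  have hkey : z ++ u = (w.drop a).take (c - a + u.length) := by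
    rw [List.take_add, hdropc, hu_take]
  have hzu_occ : OccursIn (z ++ u) w a := by
    constructor
    · rw [hkey, List.length_take, List.length_drop]
      omega
    · rw [hkey]
      exact List.take_prefix _ _
  have hzuW : z ++ u ∈ words Ω := mem_words_of_occursIn hw hzu_occ
  have hzW : z ∈ words Ω := mem_words_of_occursIn hzuW
    (show OccursIn z (z ++ u) 0 from
      ⟨by rw [List.length_append]; omega, by rw [List.drop_zero]; exact List.prefix_append z u⟩)
  have hupre : u <+: z ++ u := by
    have he : u = ((w.drop a).take (c - a + u.length)).take u.length := by
      rw [List.take_take, min_eq_left (by omega)]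
      exact List.prefix_iff_eq_take.mp ha.2
    rw [hkey]
    nth_rewrite 1 [he]
    exact List.take_prefix _ _
  have hzu_len : (z ++ u).length = (c - a) + u.length := by
    rw [List.length_append, hzlen]
  have hset : {j : ℕ | OccursIn u (z ++ u) j} = {0, c - a} := by
    ext j
    simp only [Set.mem_setOf_eq, Set.mem_insert_iff, Set.mem_singleton_iff]
    constructor
    · rintro ⟨hj1, hj2⟩
      rw [hzu_len] at hj1
      by_contra hcon
      push_neg at hcon
      obtain ⟨hj0, hjca⟩ := hcon
      have hjlt : j < c - a := by omega
      have hdj : (z ++ u).drop j = (w.drop (a + j)).take (c - a + u.length - j) := by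
        rw [hkey, List.drop_take, List.drop_drop]
      have hpre' : u <+: w.drop (a + j) := by
        rw [hdj] at hj2
        exact hj2.trans (List.take_prefix _ _)
      have hmem : a + j ∈ S := ⟨by omega, ⟨by omega, hpre'⟩⟩
      have := Nat.sInf_le hmem
      omega
    · rintro (rfl | rfl)
      · exact ⟨by omega, by simpa using hupre⟩
      · refine ⟨by omega, ?_⟩
        rw [← hzlen, List.drop_left]
  have hocc : occ u (z ++ u) = 2 := by
    rw [occ, hset]
    exact Set.ncard_pair (by omega)
  exact ⟨z, ⟨hzW, hzuW, hocc, hupre⟩, by omega⟩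

/-- (HP) holds iff return words are uniformly long: there is `κ > 0` such
that every return word `z` of a nonempty `v ∈ W` has length at least `|v|/κ`. -/
theorem HP_iff_return_words_long
    {A : Type*} [Fintype A] [Nonempty A] [TopologicalSpace A] [DiscreteTopology A]
    (Ω : Set (ℤ → A)) (hΩ : IsSubshift Ω) :
    HP (words Ω) ↔
      ∃ κ : ℝ, 0 < κ ∧ ∀ v ∈ words Ω, v ≠ [] → ∀ z : List A,
        IsReturnWord (words Ω) z v → (v.length : ℝ) / κ ≤ (z.length : ℝ) := by
  constructor
  · rintro ⟨N, hN, hHP⟩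
    refine ⟨N + 1, by positivity, ?_⟩
    intro v hv hvne z hz
    by_contra hcon
    push_neg at hcon
    have hvpos : 0 < v.length := List.length_pos_iff.mpr hvne
    -- `z` is nonempty
    have hzne : z ≠ [] := by
      intro hznil
      have h2 := hz.2.2.1
      rw [hznil, List.nil_append, occ_self] at h2
      omega
    set p := z.length with hp
    have hp1 : 1 ≤ p := List.length_pos_iff.mpr hzne
    -- the assumed inequality in ℕ
    have hlt : (N + 1) * p < v.length := by
      have h1 : (z.length : ℝ) * ((N : ℝ) + 1) < (v.length : ℝ) :=
        (lt_div_iff₀ (by positivity)).mp hcon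
      have h2 : ((z.length * (N + 1) : ℕ) : ℝ) < ((v.length : ℕ) : ℝ) := by
        push_cast
        linarith
      have h3 : z.length * (N + 1) < v.length := by exact_mod_cast h2
      rw [Nat.mul_comm]
      exact h3
    -- `v` is `p`-periodic
    have hpre : v <+: z ++ v := hz.2.2.2
    have hper : ∀ i : ℕ, ∀ hi : i + p < v.length,
        v[i + p]'(by omega) = v[i]'(by omega) := by
      intro i hi
      have hlen : i + p < (z ++ v).length := by
        rw [List.length_append]
        omega
      have h1 : v[i + p]'(by omega) = (z ++ v)[i + p]'hlen := hpre.getElem (by omega)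
      have h2 : (z ++ v)[i + p]'hlen = v[i + p - z.length]'(by omega) :=
        List.getElem_append_right (by omega)
      rw [h1, h2]
      congr 1
      omega
    -- the `p`-periodicity transfers prefixes across a shift by `p`
    have hvtake : ∀ m : ℕ, m + p ≤ v.length → (v.drop p).take m = v.take m := by
      intro m hm
      apply List.ext_getElem
      · rw [List.length_take, List.length_take, List.length_drop]
        omega
      · intro i h1 h2
        rw [List.getElem_take, List.getElem_take, List.getElem_drop]
        have hi : i < m := by
          simp only [List.length_take, List.length_drop, lt_min_iff] at h1
          omega
        have := hper i (by omega)
        rw [← this]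
        congr 1
        omega
    -- powers of `v.take p` are prefixes of `v`
    have hreptake : ∀ k : ℕ, k * p ≤ v.length →
        (List.replicate k (v.take p)).flatten = v.take (k * p) := by
      intro k
      induction k with
      | zero => intro _; simp
      | succ k ih =>
        intro hk
        have hsm : (k + 1) * p = k * p + p := by ring
        have hk' : k * p + p ≤ v.length := by omega
        rw [List.replicate_succ, List.flatten_cons, ih (by omega),
          ← hvtake (k * p) (by omega), ← List.take_add]
        congr 1
        omega
    set u := v.take p with hu
    have hu_ne : u ≠ [] := by
      intro hcontra
      have : (v.take p).length = 0 := by rw [← hu, hcontra]; rfl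
      rw [List.length_take] at this
      omega
    have hmem : (List.replicate (N + 1) u).flatten ∈ words Ω := by
      rw [hu, hreptake (N + 1) (le_of_lt hlt)]
      refine mem_words_of_occursIn (i := 0) hv ⟨?_, ?_⟩
      · rw [List.length_take]
        omega
      · simpa using List.take_prefix ((N + 1) * p) v
    have := hHP u hu_ne (N + 1) hmem
    omega
  · rintro ⟨κ, hκ, hκ2⟩
    refine ⟨⌈κ⌉₊ + 1, by omega, ?_⟩
    intro v hvne k hk
    by_contra hcon
    push_neg at hcon
    have hvpos : 0 < v.length := List.length_pos_iff.mpr hvne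
    obtain ⟨K, rfl⟩ : ∃ K, k = K + 1 := ⟨k - 1, by omega⟩
    have hK : ⌈κ⌉₊ < K := by omega
    have hK1 : 1 ≤ K := by
      have : 0 < ⌈κ⌉₊ := Nat.ceil_pos.mpr hκ
      omega
    set W0 := (List.replicate (K + 1) v).flatten with hW0
    set u := (List.replicate K v).flatten with hudef
    have hulen : u.length = K * v.length := by
      rw [hudef]
      simp
    have h1 : W0 = v ++ u := by
      rw [hW0, hudef, List.replicate_succ, List.flatten_cons]
    have h2 : W0 = u ++ v := by
      rw [hW0, hudef, List.replicate_succ', List.flatten_append]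
      simp
    have ha : OccursIn u W0 0 := by
      refine ⟨?_, ?_⟩
      · rw [h2, List.length_append]
        omega
      · rw [List.drop_zero, h2]
        exact List.prefix_append u v
    have hb : OccursIn u W0 v.length := by
      refine ⟨?_, ?_⟩
      · rw [h1, List.length_append]
      · rw [h1, List.drop_left]
    have hW0mem : W0 ∈ words Ω := hk
    have humem : u ∈ words Ω := mem_words_of_occursIn hW0mem ha
    have hune : u ≠ [] := by
      have hpos : 0 < u.length := by
        rw [hulen]
        exact Nat.mul_pos hK1 hvpos
      exact List.length_pos_iff.mp hpos
    obtain ⟨z, hzret, hzlen⟩ := exists_return_word hW0mem hvpos ha hb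
    have h3 : (u.length : ℝ) ≤ (z.length : ℝ) * κ := (div_le_iff₀ hκ).mp (hκ2 u humem hune z hzret)
    have h4 : (z.length : ℝ) ≤ (v.length : ℝ) := by
      have : z.length ≤ v.length := by omega
      exact_mod_cast this
    have h5 : (u.length : ℝ) = (K : ℝ) * (v.length : ℝ) := by
      rw [hulen]
      push_cast
      ring
    have hv1 : (0 : ℝ) < (v.length : ℝ) := by exact_mod_cast hvpos
    have h6 : (K : ℝ) ≤ κ := by nlinarith
    have h7 : K ≤ ⌈κ⌉₊ := by
      have := h6.trans (Nat.le_ceil κ)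
      exact_mod_cast this
    omega

end SubshiftErgodic
end

section
/- Let (Ω,T) be a minimal subshift over a finite alphabet A with associated set of words W. If (Ω,T) satisfies (HP) (there exists N > 0 such that for every nonempty v, v^k ∈ W implies k ≤ N) and (PW) (there exists E > 0 with liminf_{|w|→∞} ♯_v(w)·|v|/|w| ≥ E for every nonempty v ∈ W), then (Ω,T) satisfies (PQ): there is a constant C > 0 with ν(v) ≥ C for every nonempty v ∈ W; consequently (Ω,T) satisfies (SET). -/
open Filter Topology

namespace SubshiftErgodic

variable {A : Type*}

section Aux
variable {A : Type*}

lemma occursAt_take {w : List A} {ω : ℤ → A} {k : ℤ} (h : OccursAt w ω k) (n : ℕ) :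
    OccursAt (w.take n) ω k := by
  intro i
  have hi : (i : ℕ) < w.length := lt_of_lt_of_le i.2 (by simp [List.length_take])
  have := h ⟨i, hi⟩
  simp only [List.get_eq_getElem] at this ⊢
  simp [List.getElem_take, this]

lemma occursAt_drop {w : List A} {ω : ℤ → A} {k : ℤ} (h : OccursAt w ω k) (n : ℕ) :
    OccursAt (w.drop n) ω (k + n) := by
  intro i
  have hi : n + (i : ℕ) < w.length := by
    have := i.2; simp [List.length_drop] at this; omega
  have := h ⟨n + i, hi⟩
  simp only [List.get_eq_getElem] at this ⊢
  rw [List.getElem_drop]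
  rw [← this]
  congr 1
  push_cast
  ring

lemma words_take {Ω : Set (ℤ → A)} {w : List A} (h : w ∈ words Ω) (n : ℕ) :
    w.take n ∈ words Ω := by
  obtain ⟨ω, hω, k, hk⟩ := h
  exact ⟨ω, hω, k, occursAt_take hk n⟩

lemma words_drop {Ω : Set (ℤ → A)} {w : List A} (h : w ∈ words Ω) (n : ℕ) :
    w.drop n ∈ words Ω := by
  obtain ⟨ω, hω, k, hk⟩ := h
  exact ⟨ω, hω, k + n, occursAt_drop hk n⟩

lemma words_of_prefix {Ω : Set (ℤ → A)} {w v : List A} (h : w ∈ words Ω) (hp : v <+: w) :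
    v ∈ words Ω := by
  rw [List.prefix_iff_eq_take] at hp
  rw [hp]
  exact words_take h v.length

lemma words_of_occursIn {Ω : Set (ℤ → A)} {w v : List A} {i : ℕ} (h : w ∈ words Ω)
    (ho : OccursIn v w i) : v ∈ words Ω :=
  words_of_prefix (words_drop h i) ho.2

lemma exists_word_length {Ω : Set (ℤ → A)} (hne : Ω.Nonempty) (n : ℕ) :
    ∃ w ∈ words Ω, w.length = n := by
  obtain ⟨ω, hω⟩ := hne
  refine ⟨List.ofFn (fun i : Fin n => ω i), ⟨ω, hω, 0, ?_⟩, by simp⟩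
  intro i
  have hi : (i : ℕ) < n := by simpa using i.2
  simp [List.get_eq_getElem, List.getElem_ofFn]

lemma wordsFilter_hasBasis (W : Set (List A)) :
    (wordsFilter W).HasBasis (fun _ : ℕ => True) (fun L => {w | w ∈ W ∧ L ≤ w.length}) := by
  refine Filter.hasBasis_iInf_principal ?_
  intro L L'
  exact ⟨max L L', fun w hw => ⟨hw.1, le_trans (le_max_left _ _) hw.2⟩,
    fun w hw => ⟨hw.1, le_trans (le_max_right _ _) hw.2⟩⟩

lemma eventually_wordsFilter {W : Set (List A)} {p : List A → Prop} :
    (∀ᶠ w in wordsFilter W, p w) ↔ ∃ L : ℕ, ∀ w ∈ W, L ≤ w.length → p w := by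
  rw [(wordsFilter_hasBasis W).eventually_iff]
  simp only [true_and]
  constructor
  · rintro ⟨L, hL⟩; exact ⟨L, fun w hw hlw => hL ⟨hw, hlw⟩⟩
  · rintro ⟨L, hL⟩; exact ⟨L, fun w hw => hL w hw.1 hw.2⟩

lemma frequently_wordsFilter {W : Set (List A)} {p : List A → Prop} :
    (∃ᶠ w in wordsFilter W, p w) ↔ ∀ L : ℕ, ∃ w, w ∈ W ∧ L ≤ w.length ∧ p w := by
  rw [(wordsFilter_hasBasis W).frequently_iff]
  constructor
  · intro h L; obtain ⟨w, hw, hp⟩ := h L trivial; exact ⟨w, hw.1, hw.2, hp⟩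
  · intro h L _; obtain ⟨w, h1, h2, h3⟩ := h L; exact ⟨w, ⟨h1, h2⟩, h3⟩

lemma wordsFilter_neBot {Ω : Set (ℤ → A)} (hne : Ω.Nonempty) :
    (wordsFilter (words Ω)).NeBot := by
  rw [(wordsFilter_hasBasis (words Ω)).neBot_iff]
  intro L _
  obtain ⟨w, hw, hl⟩ := exists_word_length hne L
  exact ⟨w, hw, hl.ge⟩

end Aux
section Aux2
variable {A : Type*}

lemma occursIn_take_eq {v w : List A} {i : ℕ} (h : OccursIn v w i) :
    (w.drop i).take v.length = v :=
  (List.prefix_iff_eq_take.mp h.2).symm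

lemma occursIn_drop_eq {v w : List A} {i : ℕ} (h : OccursIn v w i) :
    w.drop i = v ++ w.drop (i + v.length) := by
  conv_lhs => rw [← List.take_append_drop v.length (w.drop i)]
  rw [occursIn_take_eq h, List.drop_drop]

lemma occursIn_shift_drop {v w : List A} {i d : ℕ} (hd : d ≤ i) (h : OccursIn v w i) :
    OccursIn v (w.drop d) (i - d) := by
  constructor
  · have := h.1
    simp [List.length_drop]
    omega
  · rw [List.drop_drop]
    have h3 : d + (i - d) = i := by omega
    rw [h3]
    exact h.2

lemma occursIn_length_le {v w : List A} {i : ℕ} (h : OccursIn v w i) :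
    i + v.length ≤ w.length := h.1

/-- the set of positions where a fixed `m`-family of disjoint occurrences is possible -/
lemma maxDisjoint_zero_mem (v w : List A) :
    0 ∈ {m : ℕ | ∃ s : Fin m → ℕ, (∀ i, OccursIn v w (s i)) ∧
      ∀ i j : Fin m, i < j → s i + v.length ≤ s j} :=
  ⟨fun i => i.elim0, fun i => i.elim0, fun i => i.elim0⟩

lemma disjoint_ge {v w : List A} {m : ℕ} {s : Fin m → ℕ}
    (hocc : ∀ i, OccursIn v w (s i))
    (hdis : ∀ i j : Fin m, i < j → s i + v.length ≤ s j) :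
    ∀ i : Fin m, (i : ℕ) * v.length ≤ s i := by
  intro i
  induction' hi : (i : ℕ) with t ih generalizing i
  · simp
  · have ht : t < m := by omega
    have h1 := ih ⟨t, ht⟩ rfl
    have h2 := hdis ⟨t, ht⟩ i (by simp [Fin.lt_def, hi])
    calc (t + 1) * v.length = t * v.length + v.length := by ring
    _ ≤ s ⟨t, ht⟩ + v.length := by omega
    _ ≤ s i := h2

lemma disjoint_mul_le {v w : List A} (hv : v ≠ []) {m : ℕ} {s : Fin m → ℕ}
    (hocc : ∀ i, OccursIn v w (s i))
    (hdis : ∀ i j : Fin m, i < j → s i + v.length ≤ s j) :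
    m * v.length ≤ w.length := by
  rcases Nat.eq_zero_or_pos m with hm | hm
  · simp [hm]
  · have hlast : (m - 1 : ℕ) < m := by omega
    have h1 := disjoint_ge hocc hdis ⟨m - 1, hlast⟩
    have h2 := (hocc ⟨m - 1, hlast⟩).1
    simp at h1
    have : (m - 1) * v.length + v.length = m * v.length := by
      cases m with
      | zero => omega
      | succ k => simp [Nat.succ_sub_one]; ring
    omega

lemma maxDisjoint_bddAbove {v w : List A} (hv : v ≠ []) :
    BddAbove {m : ℕ | ∃ s : Fin m → ℕ, (∀ i, OccursIn v w (s i)) ∧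
      ∀ i j : Fin m, i < j → s i + v.length ≤ s j} := by
  refine ⟨w.length, fun m hm => ?_⟩
  obtain ⟨s, h1, h2⟩ := hm
  have := disjoint_mul_le hv h1 h2
  have hvl : 1 ≤ v.length := List.length_pos_iff.mpr hv
  calc m = m * 1 := (mul_one m).symm
  _ ≤ m * v.length := Nat.mul_le_mul_left m hvl
  _ ≤ w.length := this

lemma le_maxDisjoint {v w : List A} (hv : v ≠ []) {m : ℕ}
    (hm : m ∈ {m : ℕ | ∃ s : Fin m → ℕ, (∀ i, OccursIn v w (s i)) ∧
      ∀ i j : Fin m, i < j → s i + v.length ≤ s j}) :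
    m ≤ maxDisjoint v w :=
  le_csSup (maxDisjoint_bddAbove hv) hm

lemma maxDisjoint_spec {v w : List A} (hv : v ≠ []) :
    ∃ s : Fin (maxDisjoint v w) → ℕ, (∀ i, OccursIn v w (s i)) ∧
      ∀ i j : Fin (maxDisjoint v w), i < j → s i + v.length ≤ s j :=
  Nat.sSup_mem ⟨0, maxDisjoint_zero_mem v w⟩ (maxDisjoint_bddAbove hv)

lemma maxDisjoint_mul_le {v w : List A} (hv : v ≠ []) :
    maxDisjoint v w * v.length ≤ w.length := by
  obtain ⟨s, h1, h2⟩ := maxDisjoint_spec (w := w) hv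
  exact disjoint_mul_le hv h1 h2

lemma occ_set_finite (v w : List A) (hv : v ≠ []) : {i : ℕ | OccursIn v w i}.Finite := by
  apply Set.Finite.subset (Set.finite_Iio w.length)
  intro i hi
  have := hi.1
  have hvl : 1 ≤ v.length := List.length_pos_iff.mpr hv
  simp only [Set.mem_Iio]
  omega

end Aux2
section Aux3
variable {A : Type*}

lemma length_flatten_replicate (k : ℕ) (u : List A) :
    (List.replicate k u).flatten.length = k * u.length := by
  induction k with
  | zero => simp
  | succ n ih => simp [List.replicate_succ, ih]; ring

lemma overlap_pow {Ω : Set (ℤ → A)} {v w : List A} {i p : ℕ} (hw : w ∈ words Ω)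
    (h1 : OccursIn v w i) (h2 : OccursIn v w (i + p)) (hp : 0 < p) (hpl : p < v.length) :
    (List.replicate (v.length / p + 1) (v.take p)).flatten ∈ words Ω := by
  set z := (w.drop i).take (v.length + p) with hzdef
  set u := v.take p with hudef
  have hz1 : z.take v.length = v := by
    rw [hzdef, List.take_take, min_eq_left (by omega), occursIn_take_eq h1]
  have hz2 : z.drop p = v := by
    rw [hzdef, List.drop_take, List.drop_drop]
    have : v.length + p - p = v.length := by omega
    rw [this]
    exact occursIn_take_eq h2
  have hu : z.take p = u := by
    rw [hzdef, hudef, List.take_take, min_eq_left (by omega), ← occursIn_take_eq h1,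
      List.take_take, min_eq_left (by omega)]
  have hzsplit : z = u ++ v := by
    conv_lhs => rw [← List.take_append_drop p z]
    rw [hu, hz2]
  have hzW : z ∈ words Ω := words_take (words_drop hw i) _
  have hul : u.length = p := by
    rw [hudef, List.length_take, min_eq_left (by omega)]
  have key : ∀ k : ℕ, k * p ≤ v.length + p → (List.replicate k u).flatten <+: z := by
    intro k
    induction k with
    | zero => intro _; simp
    | succ n ih =>
        intro hk
        have hnp : n * p ≤ v.length := by
          have : (n + 1) * p = n * p + p := by ring
          omega
        have hpre : (List.replicate n u).flatten <+: z := ih (by omega)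
        have hlen : (List.replicate n u).flatten.length = n * p := by
          rw [length_flatten_replicate, hul]
        have hprev : (List.replicate n u).flatten <+: v := by
          rw [← hz1]
          rw [List.prefix_take_iff]
          exact ⟨hpre, by omega⟩
        rw [List.replicate_succ, List.flatten_cons, hzsplit]
        exact (List.prefix_append_right_inj u).mpr hprev
  have hk : (v.length / p + 1) * p ≤ v.length + p := by
    have := Nat.div_mul_le_self v.length p
    have h' : (v.length / p + 1) * p = v.length / p * p + p := by ring
    omega
  exact words_of_prefix hzW (key _ hk)

lemma overlap_gap {Ω : Set (ℤ → A)} {N : ℕ}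
    (hHP : ∀ v : List A, v ≠ [] → ∀ k : ℕ, (List.replicate k v).flatten ∈ words Ω → k ≤ N)
    {v w : List A} (hw : w ∈ words Ω) (hv : v ≠ []) {a b : ℕ}
    (ha : OccursIn v w a) (hb : OccursIn v w b) (hab : a < b) (hd : b - a < v.length) :
    v.length < N * (b - a) := by
  set p := b - a with hpdef
  have hp : 0 < p := by omega
  have hb' : OccursIn v w (a + p) := by
    have : a + p = b := by omega
    rwa [this]
  have hpow := overlap_pow hw ha hb' hp hd
  have hu : v.take p ≠ [] := by
    have : (v.take p).length = p := by
      rw [List.length_take, min_eq_left (by omega)]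
    intro h
    rw [h] at this
    simp at this
    omega
  have hkN := hHP _ hu _ hpow
  have : v.length / p < N := by omega
  have := (Nat.div_lt_iff_lt_mul hp).mp this
  calc v.length < N * p := by linarith [this]
  _ = N * (b - a) := by rw [hpdef]

end Aux3
section Aux4
variable {A : Type*}

lemma window_lemma {Ω : Set (ℤ → A)} {N : ℕ} (hN : 0 < N)
    (hHP : ∀ v : List A, v ≠ [] → ∀ k : ℕ, (List.replicate k v).flatten ∈ words Ω → k ≤ N)
    {v w : List A} (hw : w ∈ words Ω) (hv : v ≠ [])
    (x : ℕ → ℕ) (hx : ∀ t ≤ N, OccursIn v w (x t)) (hmono : ∀ t < N, x t < x (t + 1)) :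
    x 0 + v.length ≤ x N := by
  by_contra hcon
  push_neg at hcon
  have hm : ∀ b, b ≤ N → ∀ a, a ≤ b → x a ≤ x b := by
    intro b
    induction b with
    | zero =>
        intro _ a ha
        have : a = 0 := by omega
        subst this
        exact le_rfl
    | succ n ih =>
        intro hb a ha
        rcases Nat.lt_or_ge a (n + 1) with h | h
        · have h1 := hmono n (by omega)
          have h2 := ih (by omega) a (by omega)
          omega
        · have : a = n + 1 := by omega
          subst this
          exact le_rfl
  have claim : ∀ t, t ≤ N → N * x 0 + t * (v.length + 1) ≤ N * x t := by
    intro t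
    induction t with
    | zero => intro _; simp
    | succ n ih =>
        intro hn
        have ih' := ih (by omega)
        have hlt := hmono n (by omega)
        have hub : x (n + 1) - x n < v.length := by
          have h1 : x 0 ≤ x n := hm n (by omega) 0 (by omega)
          have h2 : x (n + 1) ≤ x N := hm N le_rfl (n + 1) (by omega)
          omega
        have hgap := overlap_gap hHP hw hv (hx n (by omega)) (hx (n + 1) (by omega)) hlt hub
        have he : N * (x (n + 1) - x n) + N * x n = N * x (n + 1) := by
          rw [← Nat.mul_add]
          congr 1
          omega
        have hmul : (n + 1) * (v.length + 1) = n * (v.length + 1) + (v.length + 1) := by ring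
        omega
  have h1 := claim N le_rfl
  have h2 : N * (x 0 + (v.length + 1)) ≤ N * x N := by
    rw [Nat.mul_add]
    exact h1
  have := Nat.le_of_mul_le_mul_left h2 hN
  omega

lemma occ_le_mul_maxDisjoint {Ω : Set (ℤ → A)} {N : ℕ} (hN : 0 < N)
    (hHP : ∀ v : List A, v ≠ [] → ∀ k : ℕ, (List.replicate k v).flatten ∈ words Ω → k ≤ N)
    {v w : List A} (hw : w ∈ words Ω) (hv : v ≠ []) :
    occ v w ≤ N * maxDisjoint v w := by
  classical
  have hfin := occ_set_finite v w hv
  obtain ⟨c, hcard⟩ : ∃ c, hfin.toFinset.card = c := ⟨_, rfl⟩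
  have hocc_c : occ v w = c := by
    rw [← hcard]
    exact Set.ncard_eq_toFinset_card _ hfin
  rw [hocc_c]
  obtain ⟨m, hmdef⟩ : ∃ m, (c + N - 1) / N = m := ⟨_, rfl⟩
  have hmul_le : m * N ≤ c + N - 1 := by
    rw [← hmdef]
    exact Nat.div_mul_le_self _ _
  have hcm : c ≤ m * N := by
    have h1 : (c + N - 1) / N < m + 1 := by omega
    have h2 := (Nat.div_lt_iff_lt_mul hN).mp h1
    have he : (m + 1) * N = m * N + N := by ring
    omega
  have hidx1 : ∀ i : Fin m, (i : ℕ) * N < c := by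
    intro i
    have hi : (i : ℕ) + 1 ≤ m := i.2
    have h1 : ((i : ℕ) + 1) * N ≤ m * N := Nat.mul_le_mul_right N hi
    have he : ((i : ℕ) + 1) * N = (i : ℕ) * N + N := by ring
    have hc1 : 1 ≤ c := by
      by_contra hc0
      have : c = 0 := by omega
      subst this
      have : (N - 1) / N = 0 := Nat.div_eq_of_lt (by omega)
      omega
    omega
  have e := hfin.toFinset.orderIsoOfFin hcard
  have hmem : ∀ k : Fin c, ((e k : hfin.toFinset) : ℕ) ∈ {i : ℕ | OccursIn v w i} := by
    intro k
    have := (e k).2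
    rwa [Set.Finite.mem_toFinset] at this
  set s : Fin m → ℕ := fun i => ((e ⟨(i : ℕ) * N, hidx1 i⟩ : hfin.toFinset) : ℕ) with hsdef
  have hocc2 : ∀ i : Fin m, OccursIn v w (s i) := fun i => hmem _
  have hdis : ∀ i j : Fin m, i < j → s i + v.length ≤ s j := by
    intro i j hij
    have hjc : (j : ℕ) * N < c := hidx1 j
    have hij' : (i : ℕ) + 1 ≤ (j : ℕ) := hij
    have hiN : (i : ℕ) * N + N ≤ (j : ℕ) * N := by
      have h1 : ((i : ℕ) + 1) * N ≤ (j : ℕ) * N := Nat.mul_le_mul_right N hij'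
      have he : ((i : ℕ) + 1) * N = (i : ℕ) * N + N := by ring
      omega
    have hbnd : ∀ t : ℕ, (i : ℕ) * N + min t N < c := by
      intro t
      have : min t N ≤ N := min_le_right _ _
      omega
    set x : ℕ → ℕ := fun t => ((e ⟨(i : ℕ) * N + min t N, hbnd t⟩ : hfin.toFinset) : ℕ)
      with hxdef
    have hx : ∀ t ≤ N, OccursIn v w (x t) := fun t _ => hmem _
    have hxmono : ∀ t < N, x t < x (t + 1) := by
      intro t ht
      have h1 : (⟨(i : ℕ) * N + min t N, hbnd t⟩ : Fin c)
          < (⟨(i : ℕ) * N + min (t + 1) N, hbnd (t + 1)⟩ : Fin c) := by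
        simp only [Fin.mk_lt_mk]
        omega
      exact e.strictMono h1
    have hwin := window_lemma hN hHP hw hv x hx hxmono
    have hx0 : x 0 = s i := by
      have h0 : (⟨(i : ℕ) * N + min 0 N, hbnd 0⟩ : Fin c) = ⟨(i : ℕ) * N, hidx1 i⟩ := by
        apply Fin.ext
        simp
      show ((e ⟨(i : ℕ) * N + min 0 N, hbnd 0⟩ : hfin.toFinset) : ℕ) = _
      rw [h0]
    have hxN : x N ≤ s j := by
      have hle : (⟨(i : ℕ) * N + min N N, hbnd N⟩ : Fin c)
          ≤ (⟨(j : ℕ) * N, hidx1 j⟩ : Fin c) := by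
        simp only [Fin.mk_le_mk, min_self]
        omega
      exact e.monotone hle
    omega
  have hmM : m ≤ maxDisjoint v w := le_maxDisjoint hv ⟨s, hocc2, hdis⟩
  calc c ≤ m * N := hcm
  _ ≤ maxDisjoint v w * N := Nat.mul_le_mul_right N hmM
  _ = N * maxDisjoint v w := by ring

end Aux4
section Aux5
variable {A : Type*}

lemma PQ_of_HP_PW {Ω : Set (ℤ → A)} (hHP : HP (words Ω)) (hPW : PW (words Ω)) :
    PQ (words Ω) := by
  obtain ⟨N, hN, hHPa⟩ := hHP
  obtain ⟨E, hE, hPWa⟩ := hPW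
  have hN' : (0 : ℝ) < N := by exact_mod_cast hN
  refine ⟨E / N, by positivity, ?_⟩
  intro v hv hvne
  rw [nu, liminfWords]
  refine (le_liminf_iff (by isBoundedDefault) (by isBoundedDefault)).mpr ?_
  intro y hy
  induction y using EReal.rec with
  | bot => exact Filter.Eventually.of_forall fun w => EReal.bot_lt_coe _
  | coe x =>
      have hx : x < E / N := by exact_mod_cast hy
      have hxN : x * N < E := (lt_div_iff₀ hN').mp hx
      have h1 : ((x * N : ℝ) : EReal) < liminfWords (words Ω)
          (fun w => ((occ v w * v.length : ℕ) : ℝ) / (w.length : ℝ)) :=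
        lt_of_lt_of_le (by exact_mod_cast hxN) (hPWa v hv hvne)
      rw [liminfWords] at h1
      have h2 := Filter.eventually_lt_of_lt_liminf h1
      have h3 : ∀ᶠ w in wordsFilter (words Ω), w ∈ words Ω ∧ 1 ≤ w.length :=
        eventually_wordsFilter.mpr ⟨1, fun w hw hl => ⟨hw, hl⟩⟩
      filter_upwards [h2, h3] with w hw2 hw3
      have hwpos : (0 : ℝ) < (w.length : ℝ) := by exact_mod_cast hw3.2
      have hreal : x * N < ((occ v w * v.length : ℕ) : ℝ) / (w.length : ℝ) := by
        exact_mod_cast hw2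
      have hocc := occ_le_mul_maxDisjoint hN hHPa hw3.1 hvne
      have hleℕ : occ v w * v.length ≤ N * (maxDisjoint v w * v.length) := by
        rw [← mul_assoc]
        exact Nat.mul_le_mul_right _ hocc
      have hle : ((occ v w * v.length : ℕ) : ℝ)
          ≤ (N : ℝ) * ((maxDisjoint v w * v.length : ℕ) : ℝ) := by
        exact_mod_cast hleℕ
      have hdiv : ((occ v w * v.length : ℕ) : ℝ) / (w.length : ℝ)
          ≤ ((N : ℝ) * ((maxDisjoint v w * v.length : ℕ) : ℝ)) / (w.length : ℝ) :=
        (div_le_div_iff_of_pos_right hwpos).mpr hle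
      rw [mul_div_assoc] at hdiv
      have hfin : x < ((maxDisjoint v w * v.length : ℕ) : ℝ) / (w.length : ℝ) := by
        nlinarith [lt_of_lt_of_le hreal hdiv]
      exact_mod_cast hfin
  | top => exact absurd hy not_top_lt

end Aux5
section Aux6
variable {A : Type*} [Finite A]

lemma words_level_finite (W : Set (List A)) (n : ℕ) :
    {v : List A | v ∈ W ∧ v.length = n}.Finite :=
  Set.Finite.subset (List.finite_length_le A n) (fun v hv => by
    simp only [Set.mem_setOf_eq]
    exact hv.2.le)

lemma le_wordSup {W : Set (List A)} {F : List A → ℝ} {v : List A} (hv : v ∈ W) :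
    F v / (v.length : ℝ) ≤ wordSup W F v.length := by
  apply le_csSup
  · exact Set.Finite.bddAbove (Set.Finite.image _ (words_level_finite W v.length))
  · exact ⟨v, ⟨hv, rfl⟩, rfl⟩

lemma exists_short_bound (W : Set (List A)) (F : List A → ℝ) (n : ℕ) :
    ∃ B : ℝ, 0 ≤ B ∧ ∀ u ∈ W, u.length < n → F u ≤ B := by
  have hfin : {u : List A | u ∈ W ∧ u.length < n}.Finite :=
    Set.Finite.subset (List.finite_length_le A n) (fun u hu => by
      simp only [Set.mem_setOf_eq]
      exact hu.2.le)
  obtain ⟨B0, hB0⟩ := Set.Finite.bddAbove (hfin.image F)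
  refine ⟨max B0 0, le_max_right _ _, fun u hu hlu => ?_⟩
  exact le_trans (hB0 ⟨u, ⟨hu, hlu⟩, rfl⟩) (le_max_left _ _)

lemma blocks_bound {Ω : Set (ℤ → A)} {F : List A → ℝ}
    (hsub : IsSubadditive (words Ω) F) {n : ℕ} (hn : 1 ≤ n) :
    ∃ K : ℝ, 0 ≤ K ∧ ∀ u ∈ words Ω,
      F u ≤ wordSup (words Ω) F n * u.length + K := by
  obtain ⟨B, hB0, hB⟩ := exists_short_bound (words Ω) F n
  set σ := wordSup (words Ω) F n with hσ
  refine ⟨B + n * |σ|, by positivity, ?_⟩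
  suffices H : ∀ m : ℕ, ∀ u ∈ words Ω, u.length = m →
      F u ≤ σ * u.length + (B + n * |σ|) by
    intro u hu
    exact H u.length u hu rfl
  intro m
  induction m using Nat.strong_induction_on with
  | _ m ih =>
    intro u hu hlen
    rcases Nat.lt_or_ge m n with hm | hm
    · have h1 := hB u hu (by omega)
      have h2 : -(|σ|) ≤ σ := neg_abs_le σ
      have h3 : (0 : ℝ) ≤ m := by positivity
      have h4 : (m : ℝ) ≤ n := by exact_mod_cast Nat.le_of_lt hm
      have h5 : |σ| * m ≤ |σ| * n := by nlinarith [abs_nonneg σ]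
      rw [hlen]
      nlinarith
    · have hmpos : 0 < m := by omega
      have htl : (u.take n).length = n := by
        rw [List.length_take]
        omega
      have hsplit := hsub (u.take n) (u.drop n) (words_take hu n) (words_drop hu n)
        (by rw [List.take_append_drop]; exact hu)
      rw [List.take_append_drop] at hsplit
      have h1 : F (u.take n) ≤ σ * n := by
        have := le_wordSup (F := F) (words_take hu n)
        rw [htl] at this
        have hnpos : (0 : ℝ) < n := by exact_mod_cast hn
        calc F (u.take n) = (F (u.take n) / n) * n := by field_simp
        _ ≤ σ * n := by nlinarith [this]
      have hdl : (u.drop n).length = m - n := by rw [List.length_drop, hlen]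
      have h2 : F (u.drop n) ≤ σ * ((m - n : ℕ) : ℝ) + (B + n * |σ|) := by
        have := ih (m - n) (by omega) (u.drop n) (words_drop hu n) hdl
        rwa [hdl] at this
      have hcast : ((m - n : ℕ) : ℝ) = (m : ℝ) - n := by
        have : n ≤ m := hm
        push_cast [this]
        ring
      rw [hcast] at h2
      rw [hlen]
      nlinarith

lemma decomp_bound {Ω : Set (ℤ → A)} {F : List A → ℝ}
    (hsub : IsSubadditive (words Ω) F) {w : List A} (hw : w ∈ words Ω)
    {c K : ℝ} (hblock : ∀ u ∈ words Ω, F u ≤ c * u.length + K) :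
    ∀ m : ℕ, ∀ v ∈ words Ω, ∀ s : Fin m → ℕ, (∀ i, OccursIn w v (s i)) →
      (∀ i j : Fin m, i < j → s i + w.length ≤ s j) →
      F v ≤ m * F w + c * ((v.length : ℝ) - m * w.length) + (m + 1) * K := by
  intro m
  induction m with
  | zero =>
      intro v hv s _ _
      have := hblock v hv
      simpa using by linarith
  | succ m ih =>
      intro v hv s hso hsd
      set t := s 0 with htdef
      have h0 : OccursIn w v t := hso 0
      have htw : t + w.length ≤ v.length := h0.1
      have hsplit2 : v.drop t = w ++ v.drop (t + w.length) := occursIn_drop_eq h0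
      have hmem_take : v.take t ∈ words Ω := words_take hv t
      have hmem_dropt : v.drop t ∈ words Ω := words_drop hv t
      have hmem_drop2 : v.drop (t + w.length) ∈ words Ω := words_drop hv _
      have hF1 : F v ≤ F (v.take t) + F (v.drop t) := by
        have := hsub (v.take t) (v.drop t) hmem_take hmem_dropt
          (by rw [List.take_append_drop]; exact hv)
        rwa [List.take_append_drop] at this
      have hF2 : F (v.drop t) ≤ F w + F (v.drop (t + w.length)) := by
        rw [hsplit2]
        exact hsub w _ hw hmem_drop2 (by rw [← hsplit2]; exact hmem_dropt)
      have hle : ∀ i : Fin m, t + w.length ≤ s i.succ := by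
        intro i
        exact hsd 0 i.succ (Fin.succ_pos i)
      set s' : Fin m → ℕ := fun i => s i.succ - (t + w.length) with hs'def
      have hso' : ∀ i, OccursIn w (v.drop (t + w.length)) (s' i) := fun i =>
        occursIn_shift_drop (hle i) (hso i.succ)
      have hsd' : ∀ i j : Fin m, i < j → s' i + w.length ≤ s' j := by
        intro i j hij
        have h1 := hsd i.succ j.succ (by simpa using hij)
        have h2 := hle i
        have h3 := hle j
        simp only [hs'def]
        omega
      have hIH := ih (v.drop (t + w.length)) hmem_drop2 s' hso' hsd'
      have hlen2 : ((v.drop (t + w.length)).length : ℝ) = (v.length : ℝ) - t - w.length := by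
        rw [List.length_drop]
        push_cast [htw]
        ring
      rw [hlen2] at hIH
      have hFtake : F (v.take t) ≤ c * t + K := by
        have := hblock (v.take t) hmem_take
        have hlt : ((v.take t).length : ℝ) = t := by
          rw [List.length_take]
          congr 1
          omega
        rwa [hlt] at this
      push_cast
      push_cast at hIH
      nlinarith [hF1, hF2, hFtake, hIH]

end Aux6
section Aux7

lemma real_estimate {lam β C' δ ε K Fv Fw M n W0 : ℝ}
    (hδdef : δ = lam - β) (hεdef : ε = C' * δ / 4)
    (hC' : 0 < C') (hC'1 : C' ≤ 1) (hδ : 0 < δ) (hK0 : 0 ≤ K)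
    (hM0 : 0 ≤ M) (hn0 : 0 < n) (hW01 : 1 ≤ W0) (hW0n : W0 ≤ n)
    (hMW0 : M * W0 ≤ n) (hθ : C' / 2 * n < M * W0)
    (hFw : Fw < β * W0) (h2K : 2 * K ≤ C' * δ / 8 * W0)
    (hdec : Fv ≤ M * Fw + (lam + ε) * (n - M * W0) + (M + 1) * K) :
    Fv / n ≤ lam - C' * δ / 8 := by
  have hW0pos : (0 : ℝ) < W0 := lt_of_lt_of_le one_pos hW01
  obtain ⟨Q, hQ⟩ : ∃ x : ℝ, x = M * W0 := ⟨_, rfl⟩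
  rw [← hQ] at hdec hMW0 hθ
  have hB : M * Fw ≤ β * Q := by
    rw [hQ]
    nlinarith [mul_le_mul_of_nonneg_left hFw.le hM0]
  have hD : (M + 1) * K ≤ C' * δ / 8 * n := by
    have p1 : (M * W0) * K ≤ n * K := by
      rw [hQ] at hMW0
      exact mul_le_mul_of_nonneg_right hMW0 hK0
    have p2 : K * W0 ≤ K * n := mul_le_mul_of_nonneg_left hW0n hK0
    have p3 : (2 * K) * n ≤ (C' * δ / 8 * W0) * n := mul_le_mul_of_nonneg_right h2K hn0.le
    have e1 : (M + 1) * K * W0 = (M * W0) * K + K * W0 := by ring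
    have e2 : (C' * δ / 8 * n) * W0 = (C' * δ / 8 * W0) * n := by ring
    have e3 : (2 * K) * n = n * K + K * n := by ring
    have : (M + 1) * K * W0 ≤ (C' * δ / 8 * n) * W0 := by
      rw [e1, e2]
      linarith
    exact le_of_mul_le_mul_right this hW0pos
  have e4 : β * Q + (lam + ε) * (n - Q) = (lam + ε) * n - (lam + ε - β) * Q := by ring
  have e5 : (lam + ε - β) * Q = (ε + δ) * Q := by rw [hδdef]; ring
  have hG : (ε + δ) * (C' / 2 * n) ≤ (ε + δ) * Q := by
    apply mul_le_mul_of_nonneg_left hθ.le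
    have : 0 < ε := by rw [hεdef]; positivity
    linarith
  have hmain : Fv ≤ (lam + ε) * n - (ε + δ) * (C' / 2 * n) + C' * δ / 8 * n := by
    have t1 : Fv ≤ β * Q + (lam + ε) * (n - Q) + (M + 1) * K := by linarith
    rw [e4] at t1
    rw [e5] at t1
    linarith
  have s1 : (lam + ε) - (ε + δ) * (C' / 2) + C' * δ / 8 ≤ lam - C' * δ / 8 := by
    rw [hεdef]
    nlinarith [mul_nonneg (mul_nonneg hC'.le hC'.le) hδ.le]
  have s2 := mul_le_mul_of_nonneg_right s1 hn0.le
  have e6 : ((lam + ε) - (ε + δ) * (C' / 2) + C' * δ / 8) * n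
      = (lam + ε) * n - (ε + δ) * (C' / 2 * n) + C' * δ / 8 * n := by ring
  rw [e6] at s2
  rw [div_le_iff₀ hn0]
  linarith

end Aux7

/-- for a minimal subshift, (HP) and (PW) imply (PQ), and consequently the
uniform subadditive ergodic theorem (SET) holds. -/
theorem HP_PW_implies_PQ_SET
    {A : Type*} [Fintype A] [Nonempty A] [TopologicalSpace A] [DiscreteTopology A]
    (Ω : Set (ℤ → A)) (hΩ : IsSubshift Ω) (hne : Ω.Nonempty) (hmin : IsMinimal Ω)
    (hHP : HP (words Ω)) (hPW : PW (words Ω)) :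
    PQ (words Ω) ∧ SET (words Ω) := by
  have hPQ : PQ (words Ω) := PQ_of_HP_PW hHP hPW
  refine ⟨hPQ, ?_⟩
  intro F hsub
  haveI : (wordsFilter (words Ω)).NeBot := wordsFilter_neBot hne
  set g : List A → EReal := fun w => ((F w / (w.length : ℝ) : ℝ) : EReal) with hg
  set Λ : EReal := ⨅ n : {n : ℕ // 1 ≤ n}, ((wordSup (words Ω) F n.1 : ℝ) : EReal) with hΛ
  -- Upper bound: limsup ≤ Λ
  have hupper : Filter.limsup g (wordsFilter (words Ω)) ≤ Λ := by
    rw [hΛ]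
    refine le_iInf fun n => ?_
    obtain ⟨K, hK0, hKb⟩ := blocks_bound hsub n.2
    have key : ∀ ε : ℝ, 0 < ε → Filter.limsup g (wordsFilter (words Ω))
        ≤ ((wordSup (words Ω) F n.1 + ε : ℝ) : EReal) := by
      intro ε hε
      apply Filter.limsup_le_of_le (by isBoundedDefault)
      have hev : ∀ᶠ w in wordsFilter (words Ω),
          w ∈ words Ω ∧ (⌈K / ε⌉₊ + 1) ≤ w.length :=
        eventually_wordsFilter.mpr ⟨_, fun w hw hl => ⟨hw, hl⟩⟩
      filter_upwards [hev] with w hw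
      obtain ⟨hwW, hwl⟩ := hw
      have hl1 : 1 ≤ w.length := by omega
      have hwpos : (0 : ℝ) < w.length := by exact_mod_cast hl1
      have hFb := hKb w hwW
      have hceil : (⌈K / ε⌉₊ : ℝ) + 1 ≤ (w.length : ℝ) := by exact_mod_cast hwl
      have h3 : K / ε ≤ (⌈K / ε⌉₊ : ℝ) := Nat.le_ceil _
      have hKdiv : K ≤ ε * w.length := by
        have h4 : K / ε ≤ (w.length : ℝ) := by linarith
        rw [div_le_iff₀ hε] at h4
        linarith
      have hreal : F w / (w.length : ℝ) ≤ wordSup (words Ω) F n.1 + ε := by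
        rw [div_le_iff₀ hwpos]
        nlinarith
      show ((F w / (w.length : ℝ) : ℝ) : EReal) ≤ ((wordSup (words Ω) F n.1 + ε : ℝ) : EReal)
      exact_mod_cast hreal
    by_contra hlt
    push_neg at hlt
    obtain ⟨y, hy1, hy2⟩ := EReal.exists_between_coe_real hlt
    have hyR : wordSup (words Ω) F n.1 < y := by exact_mod_cast hy1
    have hkey := key (y - wordSup (words Ω) F n.1) (by linarith)
    have heq : wordSup (words Ω) F n.1 + (y - wordSup (words Ω) F n.1) = y := by ring
    rw [heq] at hkey
    exact absurd (lt_of_le_of_lt hkey hy2) (lt_irrefl _)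
  -- Lower bound: Λ ≤ liminf
  have hlower : Λ ≤ Filter.liminf g (wordsFilter (words Ω)) := by
    by_cases hbot : Λ = ⊥
    · rw [hbot]; exact bot_le
    have htop : Λ ≠ ⊤ := by
      intro h
      have h1 : Λ ≤ ((wordSup (words Ω) F 1 : ℝ) : EReal) := by
        rw [hΛ]; exact iInf_le _ (⟨1, le_rfl⟩ : {n : ℕ // 1 ≤ n})
      rw [h] at h1
      exact (EReal.coe_ne_top _) (top_le_iff.mp h1)
    obtain ⟨lam, hlam⟩ : ∃ lam : ℝ, Λ = (lam : ℝ) := by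
      refine ⟨Λ.toReal, ?_⟩
      rw [EReal.coe_toReal htop hbot]
    by_contra hcon
    push_neg at hcon
    rw [hlam] at hcon
    obtain ⟨β, hβ1, hβ2⟩ := EReal.exists_between_coe_real hcon
    have hβlam : β < lam := by exact_mod_cast hβ2
    obtain ⟨C, hC, hPQa⟩ := hPQ
    obtain ⟨C', hC'def⟩ : ∃ x : ℝ, x = min C 1 := ⟨_, rfl⟩
    have hC' : 0 < C' := by rw [hC'def]; exact lt_min hC one_pos
    have hC'1 : C' ≤ 1 := by rw [hC'def]; exact min_le_right _ _
    have hC'C : C' ≤ C := by rw [hC'def]; exact min_le_left _ _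
    obtain ⟨δ, hδdef⟩ : ∃ x : ℝ, x = lam - β := ⟨_, rfl⟩
    have hδ : 0 < δ := by rw [hδdef]; linarith
    obtain ⟨ε, hεdef⟩ : ∃ x : ℝ, x = C' * δ / 4 := ⟨_, rfl⟩
    have hε : 0 < ε := by rw [hεdef]; positivity
    -- choose n0 with wordSup n0 < lam + ε
    have h1 : Λ < ((lam + ε : ℝ) : EReal) := by
      rw [hlam]
      exact_mod_cast (by linarith : lam < lam + ε)
    rw [hΛ] at h1
    obtain ⟨n0, hn0⟩ := iInf_lt_iff.mp h1
    have hws0 : wordSup (words Ω) F n0.1 < lam + ε := by exact_mod_cast hn0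
    obtain ⟨K, hK0, hKb⟩ := blocks_bound hsub n0.2
    have hblock : ∀ u ∈ words Ω, F u ≤ (lam + ε) * u.length + K := by
      intro u hu
      have h2 := hKb u hu
      have h3 : (0 : ℝ) ≤ u.length := by positivity
      nlinarith
    -- choose w with F w / |w| < β and |w| large
    have hfreq : ∃ᶠ w in wordsFilter (words Ω), g w < ((β : ℝ) : EReal) :=
      Filter.frequently_lt_of_liminf_lt (by isBoundedDefault) hβ1
    rw [frequently_wordsFilter] at hfreq
    obtain ⟨w, hwW, hwlen, hgw⟩ := hfreq (⌈16 * K / (C' * δ)⌉₊ + 1)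
    have hwpos : 0 < w.length := by omega
    have hwne : w ≠ [] := by
      intro h
      rw [h] at hwpos
      simp at hwpos
    have hW0 : (0 : ℝ) < w.length := by exact_mod_cast hwpos
    have hgw' : ((F w / (w.length : ℝ) : ℝ) : EReal) < ((β : ℝ) : EReal) := hgw
    have hFw : F w < β * w.length := by
      have h5 : F w / (w.length : ℝ) < β := by exact_mod_cast hgw'
      rw [div_lt_iff₀ hW0] at h5
      linarith
    have hceil2 : (16 * K / (C' * δ) : ℝ) ≤ (w.length : ℝ) := by
      have h4 : (16 * K / (C' * δ) : ℝ) ≤ (⌈16 * K / (C' * δ)⌉₊ : ℝ) := Nat.le_ceil _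
      have h5 : ((⌈16 * K / (C' * δ)⌉₊ + 1 : ℕ) : ℝ) ≤ (w.length : ℝ) := by exact_mod_cast hwlen
      push_cast at h5
      linarith
    have h2K : 2 * K ≤ C' * δ / 8 * (w.length : ℝ) := by
      have h6 : 16 * K ≤ C' * δ * (w.length : ℝ) := by
        rw [div_le_iff₀ (by positivity : (0:ℝ) < C' * δ)] at hceil2
        linarith
      have e : C' * δ / 8 * (w.length : ℝ) = (C' * δ * (w.length : ℝ)) / 8 := by ring
      rw [e]
      linarith
    -- PQ at w
    have hnu := hPQa w hwW hwne
    have hC2 : ((C' / 2 : ℝ) : EReal) < ((C : ℝ) : EReal) := by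
      exact_mod_cast (by linarith : C' / 2 < C)
    have hnu' : ((C' / 2 : ℝ) : EReal) < nu (words Ω) w := lt_of_lt_of_le hC2 hnu
    rw [nu, liminfWords] at hnu'
    have hev2 := Filter.eventually_lt_of_lt_liminf hnu'
    rw [eventually_wordsFilter] at hev2
    obtain ⟨L2, hL2⟩ := hev2
    obtain ⟨n1, hn1def⟩ : ∃ x : ℕ, x = max (max L2 w.length) 1 := ⟨_, rfl⟩
    have hn11 : 1 ≤ n1 := by rw [hn1def]; exact le_max_right _ 1
    -- main estimate for words of length n1
    have hbound : ∀ v ∈ words Ω, v.length = n1 →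
        F v / (v.length : ℝ) ≤ lam - C' * δ / 8 := by
      intro v hvW hvlen
      have hvL2 : L2 ≤ v.length := by
        rw [hvlen, hn1def]
        exact le_trans (le_max_left _ _) (le_max_left _ _)
      have hvw : w.length ≤ v.length := by
        rw [hvlen, hn1def]
        exact le_trans (le_max_right _ _) (le_max_left _ _)
      have hv1 : 1 ≤ v.length := by omega
      have hnpos : (0 : ℝ) < v.length := by exact_mod_cast hv1
      have hθE := hL2 v hvW hvL2
      have hθR : C' / 2 < ((maxDisjoint w v * w.length : ℕ) : ℝ) / (v.length : ℝ) := by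
        exact_mod_cast hθE
      obtain ⟨s, hso, hsd⟩ := maxDisjoint_spec (v := w) (w := v) hwne
      have hdec := decomp_bound hsub hwW hblock (maxDisjoint w v) v hvW s hso hsd
      have hmul : maxDisjoint w v * w.length ≤ v.length := maxDisjoint_mul_le hwne
      have hM0 : (0 : ℝ) ≤ (maxDisjoint w v : ℝ) := by positivity
      have hMW0 : (maxDisjoint w v : ℝ) * (w.length : ℝ) ≤ (v.length : ℝ) := by
        exact_mod_cast hmul
      have hθ' : C' / 2 * (v.length : ℝ) < (maxDisjoint w v : ℝ) * (w.length : ℝ) := by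
        have h7 : C' / 2 < ((maxDisjoint w v : ℝ) * (w.length : ℝ)) / (v.length : ℝ) := by
          have : ((maxDisjoint w v * w.length : ℕ) : ℝ)
              = (maxDisjoint w v : ℝ) * (w.length : ℝ) := by push_cast; ring
          rwa [this] at hθR
        rw [lt_div_iff₀ hnpos] at h7
        linarith
      have hW0n : (w.length : ℝ) ≤ (v.length : ℝ) := by exact_mod_cast hvw
      have hW01 : (1 : ℝ) ≤ (w.length : ℝ) := by exact_mod_cast hwpos
      exact real_estimate hδdef hεdef hC' hC'1 hδ hK0 hM0 hnpos hW01 hW0n hMW0 hθ' hFw h2K hdec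
    -- conclude
    obtain ⟨v0, hv0W, hv0l⟩ := exists_word_length hne n1
    have hws1 : wordSup (words Ω) F n1 ≤ lam - C' * δ / 8 := by
      apply csSup_le
      · exact ⟨F v0 / (v0.length : ℝ), ⟨v0, ⟨hv0W, hv0l⟩, rfl⟩⟩
      · rintro b ⟨v, ⟨hvW, hvl⟩, rfl⟩
        exact hbound v hvW hvl
    have hΛle : Λ ≤ ((wordSup (words Ω) F n1 : ℝ) : EReal) := by
      rw [hΛ]
      exact iInf_le _ (⟨n1, hn11⟩ : {n : ℕ // 1 ≤ n})
    rw [hlam] at hΛle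
    have hlamle : lam ≤ wordSup (words Ω) F n1 := by exact_mod_cast hΛle
    have hpos : 0 < C' * δ / 8 := by positivity
    linarith
  have hle := Filter.liminf_le_limsup (f := wordsFilter (words Ω)) (u := g)
  have heq1 : Filter.liminf g (wordsFilter (words Ω)) = Λ :=
    le_antisymm (le_trans hle hupper) hlower
  have heq2 : Filter.limsup g (wordsFilter (words Ω)) = Λ :=
    le_antisymm hupper (le_trans hlower hle)
  exact tendsto_of_liminf_eq_limsup heq1 heq2

end SubshiftErgodic
end

section
/- Let (Ω,T) be a subshift over a finite alphabet A with associated set of words W. If (Ω,T) is linearly repetitive, i.e. there exists D > 0 such that every nonempty v ∈ W is a factor of every w ∈ W with |w| ≥ D|v|, then (Ω,T) satisfies (SET): for every subadditive function F: W → ℝ the limit lim_{|w|→∞} F(w)/|w| exists and equals inf_{n≥1} F^{(n)}. -/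
open Filter Topology

namespace SubshiftErgodic

variable {A : Type*}

/-!
The upper bound needs only subadditivity: cutting `w` into blocks of length `n` gives
`F w ≤ |w| F^(n) + O(1)`, so `limsup F(w)/|w| ≤ F^(n)` for every `n`. For the lower bound let
`Λ = inf F^(n)` and choose `n` with `F^(n) ≤ Λ + δ`, so that `F u ≤ |u| (Λ + δ) + K` for every
word `u`. By linear repetitivity a word `w` occurs in every word `b = s w t` of length
`q = |w| + ⌈D |w|⌉`, hence `F b ≤ F w + (q - |w|)(Λ + δ) + 2K`. As `q Λ ≤ q F^(q) = max F b`,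
this forces `F w ≥ |w| (Λ - D δ) - O(1)`.
-/

def IsFactorClosed (W : Set (List A)) : Prop :=
  ∀ ⦃v w : List A⦄, v <:+: w → w ∈ W → v ∈ W

theorem words_isFactorClosed (Ω : Set (ℤ → A)) : IsFactorClosed (words Ω) := by
  rintro v _ ⟨s, t, rfl⟩ ⟨ω, hω, k, hk⟩
  refine ⟨ω, hω, k + s.length, fun i => ?_⟩
  have := hk ⟨s.length + i, by simp only [List.length_append]; omega⟩
  simpa [List.getElem_append_left, List.getElem_append_right, add_assoc] using this

theorem exists_mem_words_length {Ω : Set (ℤ → A)} (hΩ : Ω.Nonempty) (n : ℕ) :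
    ∃ v ∈ words Ω, v.length = n := by
  obtain ⟨ω, hω⟩ := hΩ
  exact ⟨List.ofFn fun i : Fin n => ω i, ⟨ω, hω, 0, fun i => by simp⟩, List.length_ofFn⟩

theorem tendsto_coe_ereal_of_forall_real {α : Type*} {l : Filter α} {f : α → ℝ} {a : EReal}
    (hlt : ∀ y : ℝ, a < y → ∀ᶠ x in l, f x < y)
    (hgt : ∀ y : ℝ, (y : EReal) < a → ∀ᶠ x in l, y < f x) :
    Tendsto (fun x => (f x : EReal)) l (𝓝 a) := by
  refine tendsto_order.2 ⟨fun b hb => ?_, fun b hb => ?_⟩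
  · obtain ⟨y, hby, hya⟩ := EReal.lt_iff_exists_real_btwn.1 hb
    exact (hgt y hya).mono fun x hx => hby.trans (EReal.coe_lt_coe_iff.2 hx)
  · obtain ⟨y, hay, hyb⟩ := EReal.lt_iff_exists_real_btwn.1 hb
    exact (hlt y hay).mono fun x hx => (EReal.coe_lt_coe_iff.2 hx).trans hyb

section Words

variable {W : Set (List A)} {F : List A → ℝ}

theorem eventually_wordsFilter_of_forall {p : List A → Prop} (L : ℕ)
    (h : ∀ w ∈ W, L ≤ w.length → p w) : ∀ᶠ w in wordsFilter W, p w :=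
  mem_iInf_of_mem L (mem_principal.2 fun w hw => h w hw.1 hw.2)

theorem eventually_div_length_lt_of_le {S K y : ℝ}
    (hbound : ∀ v ∈ W, v ≠ [] → F v ≤ v.length * S + K) (hy : S < y) :
    ∀ᶠ w in wordsFilter W, F w / w.length < y := by
  obtain ⟨L, hL⟩ := exists_nat_gt (K / (y - S))
  refine eventually_wordsFilter_of_forall (L + 1) fun w hw hwL => ?_
  have hw0 : (0 : ℝ) < w.length := by exact_mod_cast (by omega : 0 < w.length)
  have hLw : (L : ℝ) ≤ w.length := by exact_mod_cast (by omega : L ≤ w.length)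
  rw [div_lt_iff₀ (sub_pos.2 hy)] at hL
  rw [div_lt_iff₀ hw0]
  nlinarith [hbound w hw (List.ne_nil_of_length_pos (by omega))]

theorem eventually_lt_div_length_of_le {S K y : ℝ}
    (hbound : ∀ v ∈ W, v ≠ [] → v.length * S - K ≤ F v) (hy : y < S) :
    ∀ᶠ w in wordsFilter W, y < F w / w.length := by
  have hneg : ∀ v ∈ W, v ≠ [] → (-F) v ≤ v.length * (-S) + K := fun v hv hv0 => by
    simp only [Pi.neg_apply]
    linarith [hbound v hv hv0]
  filter_upwards [eventually_div_length_lt_of_le hneg (neg_lt_neg hy)] with w hw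
  rw [Pi.neg_apply, neg_div] at hw
  linarith

theorem wordSup_bddAbove [Finite A] (W : Set (List A)) (F : List A → ℝ) (n : ℕ) :
    BddAbove ((fun v => F v / (v.length : ℝ)) '' {v | v ∈ W ∧ v.length = n}) :=
  (((List.finite_length_eq A n).subset fun _ hv => hv.2).image _).bddAbove

theorem apply_le_length_mul_wordSup [Finite A] {v : List A} (hv : v ∈ W) (hv0 : v ≠ []) :
    F v ≤ v.length * wordSup W F v.length := by
  rw [← div_le_iff₀' (by exact_mod_cast List.length_pos_iff.2 hv0)]
  exact le_csSup (wordSup_bddAbove W F _) ⟨v, ⟨hv, rfl⟩, rfl⟩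

theorem mul_le_of_le_wordSup {q : ℕ} (hq : 0 < q) (hW : ∃ b ∈ W, b.length = q) {x P : ℝ}
    (hx : x ≤ wordSup W F q) (hP : ∀ b ∈ W, b.length = q → F b ≤ P) : q * x ≤ P := by
  have hq' : (0 : ℝ) < q := by exact_mod_cast hq
  rw [← le_div_iff₀' hq']
  refine hx.trans (csSup_le ?_ ?_)
  · obtain ⟨b, hb, hbq⟩ := hW
    exact ⟨_, b, ⟨hb, hbq⟩, rfl⟩
  · rintro _ ⟨b, ⟨hb, rfl⟩, rfl⟩
    exact div_le_div_of_nonneg_right (hP b hb rfl) hq'.le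

namespace IsSubadditive

variable (hW : IsFactorClosed W) (hF : IsSubadditive W F)
include hW hF

theorem apply_append_le {a b : List A} (h : a ++ b ∈ W) : F (a ++ b) ≤ F a + F b :=
  hF a b (hW (List.prefix_append a b).isInfix h) (hW (List.suffix_append a b).isInfix h) h

theorem apply_append_append_le {s w t : List A} (h : s ++ w ++ t ∈ W) :
    F (s ++ w ++ t) ≤ F s + F w + F t :=
  (apply_append_le hW hF h).trans
    (add_le_add_left (apply_append_le hW hF (hW (List.prefix_append _ _).isInfix h)) _)

theorem exists_le_length_mul_wordSup_add [Finite A] {n : ℕ} (hn : 0 < n) :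
    ∃ K, ∀ v ∈ W, F v ≤ v.length * wordSup W F n + K := by
  obtain ⟨C, hC⟩ := ((List.finite_length_lt A n).image F).bddAbove
  refine ⟨C + n * |wordSup W F n|, fun v hv => ?_⟩
  induction hl : v.length using Nat.strong_induction_on generalizing v with
  | _ m ih =>
  subst hl
  by_cases hvn : v.length < n
  · have hvn' : (v.length : ℝ) ≤ n := by exact_mod_cast hvn.le
    nlinarith [hC ⟨v, hvn, rfl⟩, neg_abs_le (wordSup W F n), abs_nonneg (wordSup W F n)]
  · push Not at hvn
    have hsplit := apply_append_le hW hF ((List.take_append_drop n v).symm ▸ hv)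
    rw [List.take_append_drop] at hsplit
    have htake : (v.take n).length = n := by simp only [List.length_take]; omega
    have h1 := apply_le_length_mul_wordSup (F := F) (hW (List.take_prefix n v).isInfix hv)
      (List.ne_nil_of_length_pos (by omega))
    have h2 := ih _ (by simp only [List.length_drop]; omega) _
      (hW (List.drop_suffix n v).isInfix hv) rfl
    rw [htake] at h1
    rw [List.length_drop, Nat.cast_sub hvn] at h2
    linarith

theorem length_mul_sub_le (hlen : ∀ n, ∃ v ∈ W, v.length = n) {D : ℝ} (hD : 0 ≤ D)
    (hLR : ∀ v ∈ W, v ≠ [] → ∀ w ∈ W, D * v.length ≤ w.length → v <:+: w)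
    {x S K : ℝ} (hx : ∀ n, 1 ≤ n → x ≤ wordSup W F n) (hxS : x ≤ S)
    (hS : ∀ u ∈ W, F u ≤ u.length * S + K) {w : List A} (hw : w ∈ W) (hw0 : w ≠ []) :
    w.length * (x - D * (S - x)) - (S - x + 2 * K) ≤ F w := by
  set c := ⌈D * w.length⌉₊
  have hq : 0 < w.length + c := Nat.add_pos_left (List.length_pos_iff.2 hw0) _
  have hblock : ∀ b ∈ W, b.length = w.length + c → F b ≤ F w + c * S + 2 * K := by
    intro b hb hbl
    obtain ⟨s, t, rfl⟩ := hLR w hw hw0 b hb <| by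
      rw [hbl]
      push_cast
      linarith [Nat.le_ceil (D * w.length), (w.length.cast_nonneg : (0 : ℝ) ≤ _)]
    have hst : (s.length : ℝ) + t.length = c := by
      simp only [List.length_append] at hbl
      exact_mod_cast (by omega : s.length + t.length = c)
    have hcS : (c : ℝ) * S = s.length * S + t.length * S := by rw [← hst]; ring
    linarith [apply_append_append_le hW hF hb, hS s (hW ⟨[], w ++ t, by simp⟩ hb),
      hS t (hW (List.suffix_append _ _).isInfix hb)]
  have key := mul_le_of_le_wordSup hq (hlen _) (hx _ hq) hblock
  have hc : (c : ℝ) * (S - x) ≤ (D * w.length + 1) * (S - x) :=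
    mul_le_mul_of_nonneg_right (Nat.ceil_lt_add_one (by positivity)).le (sub_nonneg.2 hxS)
  push_cast at key
  nlinarith

theorem eventually_div_length_lt_of_wordSup_lt [Finite A] {n : ℕ} (hn : 1 ≤ n) {y : ℝ}
    (hy : wordSup W F n < y) : ∀ᶠ w in wordsFilter W, F w / w.length < y := by
  obtain ⟨K, hK⟩ := exists_le_length_mul_wordSup_add hW hF hn
  exact eventually_div_length_lt_of_le (fun v hv _ => hK v hv) hy

theorem eventually_lt_div_length_of_lt_iInf [Finite A] (hlen : ∀ n, ∃ v ∈ W, v.length = n)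
    (hLR : LinearlyRepetitive W) {x y : ℝ}
    (hx : (x : EReal) = ⨅ n : {n : ℕ // 1 ≤ n}, (wordSup W F n.1 : EReal)) (hy : y < x) :
    ∀ᶠ w in wordsFilter W, y < F w / w.length := by
  obtain ⟨D, hD, hLR⟩ := hLR
  have hx_le : ∀ n, 1 ≤ n → x ≤ wordSup W F n := fun n hn =>
    EReal.coe_le_coe_iff.1 (hx ▸ iInf_le _ (⟨n, hn⟩ : {n : ℕ // 1 ≤ n}))
  have hδ : 0 < (x - y) / D := div_pos (sub_pos.2 hy) hD
  obtain ⟨⟨n, hn⟩, hnx⟩ :=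
    iInf_lt_iff.1 (hx ▸ EReal.coe_lt_coe_iff.2 (lt_add_of_pos_right x hδ))
  obtain ⟨K, hK⟩ := exists_le_length_mul_wordSup_add hW hF hn
  refine eventually_lt_div_length_of_le (fun w hw hw0 =>
    length_mul_sub_le hW hF hlen hD.le hLR hx_le (hx_le n hn) hK hw hw0) ?_
  have := mul_lt_mul_of_pos_left (EReal.coe_lt_coe_iff.1 hnx) hD
  rw [mul_add, mul_div_cancel₀ _ hD.ne'] at this
  linarith

end IsSubadditive

theorem set_of_linearlyRepetitive [Finite A] (hW : IsFactorClosed W)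
    (hlen : ∀ n, ∃ v ∈ W, v.length = n) (hLR : LinearlyRepetitive W) : SET W := by
  intro F hF
  refine tendsto_coe_ereal_of_forall_real (fun y hy => ?_) (fun y hy => ?_)
  · obtain ⟨⟨n, hn⟩, hny⟩ := iInf_lt_iff.1 hy
    exact hF.eventually_div_length_lt_of_wordSup_lt hW hn (EReal.coe_lt_coe_iff.1 hny)
  · set Λ := ⨅ n : {n : ℕ // 1 ≤ n}, (wordSup W F n.1 : EReal)
    have hΛ1 : Λ ≤ (wordSup W F 1 : EReal) := iInf_le _ (⟨1, le_rfl⟩ : {n : ℕ // 1 ≤ n})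
    have hΛ : (Λ.toReal : EReal) = Λ :=
      EReal.coe_toReal (ne_top_of_le_ne_top (EReal.coe_ne_top _) hΛ1) (ne_bot_of_gt hy)
    exact hF.eventually_lt_div_length_of_lt_iInf hW hlen hLR hΛ
      (EReal.coe_lt_coe_iff.1 (hΛ ▸ hy))

end Words

theorem linearlyRepetitive_implies_SET_general
    {A : Type*} [Fintype A] (Ω : Set (ℤ → A)) (hLR : LinearlyRepetitive (words Ω)) :
    SET (words Ω) := by
  rcases Ω.eq_empty_or_nonempty with rfl | hΩ
  · intro F _
    simp [words, wordsFilter] -- `wordsFilter ∅ = ⊥`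
  · exact set_of_linearlyRepetitive (words_isFactorClosed Ω) (exists_mem_words_length hΩ) hLR

/-- a linearly repetitive subshift satisfies the uniform subadditive
ergodic theorem (SET). -/
theorem linearlyRepetitive_implies_SET
    {A : Type*} [Fintype A] [Nonempty A] [TopologicalSpace A] [DiscreteTopology A]
    (Ω : Set (ℤ → A)) (hΩ : IsSubshift Ω) (hLR : LinearlyRepetitive (words Ω)) :
    SET (words Ω) :=
  linearlyRepetitive_implies_SET_general Ω hLR

end SubshiftErgodic
end

section
/- Let (Ω,T) be a subshift over a finite alphabet A with associated set of words W. If (Ω,T) satisfies (SET), i.e. for every subadditive function F: W → ℝ the limit lim_{|w|→∞} F(w)/|w| exists and equals inf_{n≥1} F^{(n)}, then (Ω,T) is uniquely ergodic: for every v ∈ W the limit lim_{|w|→∞} ♯_v(w)/|w| over w ∈ W exists. -/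
open Filter Topology

namespace SubshiftErgodic

variable {A : Type*}

lemma occursIn_finite (v w : List A) : {i : ℕ | OccursIn v w i}.Finite :=
  (Set.finite_Iic w.length).subset fun i hi =>
    le_trans (Nat.le_add_right i v.length) hi.1

lemma occ_le (v w : List A) : occ v w ≤ w.length + 1 := by
  have h : {i : ℕ | OccursIn v w i} ⊆ ↑(Finset.range (w.length + 1)) := by
    intro i hi
    simp only [Finset.coe_range, Set.mem_Iio]
    have := hi.1
    omega
  calc occ v w ≤ (↑(Finset.range (w.length + 1)) : Set ℕ).ncard :=
        Set.ncard_le_ncard h (Finset.range _).finite_toSet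
    _ = w.length + 1 := by rw [Set.ncard_coe_finset, Finset.card_range]

lemma prefix_of_prefix_append {v l m : List A} (h : v <+: l ++ m)
    (hlen : v.length ≤ l.length) : v <+: l := by
  have hv : v = l.take v.length :=
    (List.prefix_iff_eq_take.mp h).trans (List.take_append_of_le_length hlen)
  have h2 := List.take_prefix v.length l
  rwa [← hv] at h2

lemma occ_append_le (v a b : List A) :
    occ v (a ++ b) ≤ occ v a + occ v b + v.length := by
  classical
  set S1 : Set ℕ := {i | OccursIn v a i}
  set S2 : Set ℕ := (· + a.length) '' {j | OccursIn v b j}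
  set S3 : Set ℕ := ↑(Finset.Ico (a.length + 1 - v.length) a.length)
  have hsub : {i : ℕ | OccursIn v (a ++ b) i} ⊆ S1 ∪ S2 ∪ S3 := by
    intro i hi
    obtain ⟨hle, hpre⟩ := hi
    rw [List.length_append] at hle
    rcases le_or_gt (i + v.length) a.length with h1 | h1
    · left; left
      refine ⟨h1, ?_⟩
      have hdrop : (a ++ b).drop i = a.drop i ++ b := by
        rw [List.drop_append, Nat.sub_eq_zero_of_le (by omega), List.drop_zero]
      rw [hdrop] at hpre
      exact prefix_of_prefix_append hpre (by rw [List.length_drop]; omega)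
    · rcases le_or_gt a.length i with h2 | h2
      · left; right
        refine ⟨i - a.length, ⟨by omega, ?_⟩, show i - a.length + a.length = i by omega⟩
        have hdrop : (a ++ b).drop i = b.drop (i - a.length) := by
          rw [List.drop_append, List.drop_eq_nil_of_le h2, List.nil_append]
        rwa [hdrop] at hpre
      · right
        simp only [S3, Finset.coe_Ico, Set.mem_Ico]
        omega
  calc occ v (a ++ b) ≤ (S1 ∪ S2 ∪ S3).ncard := by
        refine Set.ncard_le_ncard hsub ?_
        exact Set.Finite.union (Set.Finite.union (occursIn_finite v a)
          ((occursIn_finite v b).image _)) (Finset.finite_toSet _)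
    _ ≤ (S1 ∪ S2).ncard + S3.ncard := Set.ncard_union_le _ _
    _ ≤ S1.ncard + S2.ncard + S3.ncard := by
        have := Set.ncard_union_le S1 S2; omega
    _ ≤ occ v a + occ v b + v.length := by
        have h2 : S2.ncard = occ v b :=
          Set.ncard_image_of_injective _ (add_left_injective a.length)
        have h3 : S3.ncard ≤ v.length := by
          rw [Set.ncard_coe_finset, Nat.card_Ico]; omega
        simp only [occ, S1] at *
        omega

lemma directed_wf (W : Set (List A)) :
    Directed (· ≥ ·) (fun L : ℕ => Filter.principal {w : List A | w ∈ W ∧ L ≤ w.length}) := by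
  intro L1 L2
  exact ⟨max L1 L2,
    Filter.principal_mono.2 fun w hw => ⟨hw.1, le_trans (le_max_left _ _) hw.2⟩,
    Filter.principal_mono.2 fun w hw => ⟨hw.1, le_trans (le_max_right _ _) hw.2⟩⟩

lemma mem_wordsFilter {W : Set (List A)} {s : Set (List A)} :
    s ∈ wordsFilter W ↔ ∃ L : ℕ, ∀ w ∈ W, L ≤ w.length → w ∈ s := by
  rw [wordsFilter, Filter.mem_iInf_of_directed (directed_wf W)]
  simp only [Filter.mem_principal, Set.subset_def, Set.mem_setOf_eq]
  exact ⟨fun ⟨L, h⟩ => ⟨L, fun w hw hl => h w ⟨hw, hl⟩⟩,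
    fun ⟨L, h⟩ => ⟨L, fun w hw => h w hw.1 hw.2⟩⟩

lemma wordsFilter_neBot_s11 {W : Set (List A)} (h : ∀ L : ℕ, ∃ w ∈ W, L ≤ w.length) :
    (wordsFilter W).NeBot := by
  refine Filter.iInf_neBot_of_directed (directed_wf W) fun L => ?_
  rw [Filter.principal_neBot_iff]
  obtain ⟨w, hw, hl⟩ := h L
  exact ⟨w, hw, hl⟩

/-- the uniform subadditive ergodic theorem (SET) implies unique
ergodicity. -/
theorem SET_implies_uniquelyErgodic
    {A : Type*} [Fintype A] [Nonempty A] [TopologicalSpace A] [DiscreteTopology A]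
    (Ω : Set (ℤ → A)) (hΩ : IsSubshift Ω) (hSET : SET (words Ω)) :
    UniquelyErgodic Ω := by
  intro v hv
  classical
  obtain ⟨ω, hω, k0, hk0⟩ := hv
  have hlong : ∀ L : ℕ, ∃ w ∈ words Ω, L ≤ w.length := by
    intro L
    refine ⟨List.ofFn (fun i : Fin L => ω i), ⟨ω, hω, 0, ?_⟩, by simp⟩
    intro i
    rw [List.get_ofFn]
    simp
  haveI := wordsFilter_neBot_s11 hlong
  set F : List A → ℝ := fun w => (occ v w : ℝ) + v.length with hFdef
  have hFsub : IsSubadditive (words Ω) F := by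
    intro a b _ _ _
    have h := occ_append_le v a b
    have h' : (occ v (a ++ b) : ℝ) ≤ (occ v a : ℝ) + occ v b + v.length := by
      exact_mod_cast h
    simp only [hFdef]
    linarith
  have hT := hSET F hFsub
  set y : EReal := ⨅ n : {n : ℕ // 1 ≤ n}, ((wordSup (words Ω) F n.1 : ℝ) : EReal) with hy
  have hbound : ∀ᶠ w in wordsFilter (words Ω),
      ((F w / (w.length : ℝ) : ℝ) : EReal) ∈
        Set.Icc (0 : EReal) (((v.length : ℝ) + 2 : ℝ) : EReal) := by
    rw [Filter.eventually_iff, mem_wordsFilter]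
    refine ⟨1, fun w _ hl => ?_⟩
    have hwpos : (0 : ℝ) < (w.length : ℝ) := by exact_mod_cast hl
    have hocc : (occ v w : ℝ) ≤ (w.length : ℝ) + 1 := by exact_mod_cast occ_le v w
    constructor
    · have : (0 : ℝ) ≤ F w / (w.length : ℝ) := by
        apply div_nonneg _ hwpos.le
        simp only [hFdef]
        positivity
      exact_mod_cast this
    · have : F w / (w.length : ℝ) ≤ (v.length : ℝ) + 2 := by
        rw [div_le_iff₀ hwpos]
        have h1 : (1 : ℝ) ≤ (w.length : ℝ) := by exact_mod_cast hl
        simp only [hFdef]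
        nlinarith [Nat.cast_nonneg (α := ℝ) v.length]
      exact_mod_cast this
  have hyIcc : y ∈ Set.Icc (0 : EReal) (((v.length : ℝ) + 2 : ℝ) : EReal) :=
    isClosed_Icc.mem_of_tendsto hT hbound
  have hytop : y ≠ ⊤ := (lt_of_le_of_lt hyIcc.2 (EReal.coe_lt_top _)).ne
  have hybot : y ≠ ⊥ := by
    intro hb
    rw [hb] at hyIcc
    exact absurd hyIcc.1 (by simp)
  set x : ℝ := y.toReal with hx
  rw [← EReal.coe_toReal hytop hybot] at hT
  have hTr : Filter.Tendsto (fun w => F w / (w.length : ℝ))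
      (wordsFilter (words Ω)) (nhds x) := EReal.tendsto_coe.mp hT
  refine ⟨x, ?_⟩
  intro ε hε
  have hhalf : 0 < ε / 2 := by linarith
  have hev := Metric.tendsto_nhds.mp hTr (ε / 2) hhalf
  rw [Filter.eventually_iff, mem_wordsFilter] at hev
  obtain ⟨L₁, hL₁⟩ := hev
  obtain ⟨L₂, hL₂⟩ := exists_nat_ge (2 * (v.length : ℝ) / ε)
  refine ⟨max L₁ L₂ + 1, fun w hw hl => ?_⟩
  have hl₁ : L₁ ≤ w.length := by omega
  have hl₂ : L₂ ≤ w.length := by omega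
  have hwpos : (0 : ℝ) < (w.length : ℝ) := by
    have : 1 ≤ w.length := by omega
    exact_mod_cast this
  have hd := hL₁ w hw hl₁
  rw [Set.mem_setOf_eq, Real.dist_eq] at hd
  have hsplit : (occ v w : ℝ) / (w.length : ℝ)
      = F w / (w.length : ℝ) - (v.length : ℝ) / (w.length : ℝ) := by
    simp only [hFdef]
    rw [add_div]
    ring
  have hsmall : (v.length : ℝ) / (w.length : ℝ) ≤ ε / 2 := by
    rw [div_le_iff₀ hwpos]
    have hcast : (L₂ : ℝ) ≤ (w.length : ℝ) := by exact_mod_cast hl₂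
    have h2v : 2 * (v.length : ℝ) ≤ ε * (w.length : ℝ) := by
      have := (div_le_iff₀ hε).mp (hL₂.trans hcast)
      linarith
    linarith
  have hnn : (0 : ℝ) ≤ (v.length : ℝ) / (w.length : ℝ) := by positivity
  show ‖(occ v w : ℝ) / (w.length : ℝ) - x‖ ≤ ε
  rw [hsplit, Real.norm_eq_abs, abs_le]
  have had := abs_lt.mp hd
  constructor <;> linarith [had.1, had.2]

end SubshiftErgodic
end

section
/- Let (Ω,T) be a minimal subshift over a finite alphabet A with associated set of words W, let B be a Banach space, and let f: Ω → B be continuous. For ω ∈ Ω and w ∈ W, let k_ω^w be the minimal nonnegative integer k with ω_k ω_{k+1} ⋯ ω_{k+|w|−1} = w (which exists by minimality), and set F_ω(w) = Σ_{j=0}^{|w|−1} f(T^{k_ω^w + j} ω). Then for every ε > 0 there exists l such that ‖F_ω(w) − F_ρ(w)‖ ≤ ε|w| for all ω, ρ ∈ Ω and all w ∈ W with |w| ≥ l; equivalently, there is a nonincreasing function c: [0,∞) → [0,∞) with c(r) → 0 as r → ∞ such that ‖F_ω(w) − F_ρ(w)‖ ≤ c(|w|)|w| for all ω, ρ ∈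 Ω and w ∈ W. -/
/-!
Let `k = k_ω^w` and `k' = k_ρ^w`. For `N ≤ j < |w| - N` the points `T^(k+j) ω` and
`T^(k'+j) ρ` agree on `[-N, N]`, since both read `w` around position `j`. On the compact set `Ω`
the continuous `f` is uniformly continuous for this notion of closeness, so these summands of
`F_ω(w) - F_ρ(w)` are at most `ε/2`. The remaining `2N` summands are bounded by `2 sup_Ω ‖f‖`,
which is `≤ ε|w|/2` once `|w|` is large. That `k_ω^w` exists follows from minimality together
with compactness.
-/

open Filter Topology

namespace SubshiftErgodic

variable {A : Type*}

section Shift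

lemma shiftZ_shiftZ (a b : ℤ) (ω : ℤ → A) : shiftZ a (shiftZ b ω) = shiftZ (b + a) ω := by
  funext k; simp only [shiftZ, add_assoc, add_comm a]

lemma shiftZ_zero (ω : ℤ → A) : shiftZ 0 ω = ω := by
  funext k; simp only [shiftZ, add_zero]

lemma occursAt_shiftZ {w : List A} {ω : ℤ → A} {m k : ℤ} :
    OccursAt w (shiftZ m ω) k ↔ OccursAt w ω (k + m) := by
  simp only [OccursAt, shiftZ, add_right_comm]

lemma OccursAt.apply_eq {w : List A} {ω ρ : ℤ → A} {k k' m : ℤ} (hω : OccursAt w ω k)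
    (hρ : OccursAt w ρ k') (hm₀ : 0 ≤ m) (hm : m < w.length) : ω (k + m) = ρ (k' + m) := by
  lift m to ℕ using hm₀
  exact (hω ⟨m, by omega⟩).trans (hρ ⟨m, by omega⟩).symm

lemma isOpen_setOf_occursAt [TopologicalSpace A] [DiscreteTopology A] (w : List A) (k : ℤ) :
    IsOpen {ω : ℤ → A | OccursAt w ω k} := by
  simp only [OccursAt, Set.ofPred_forall]
  exact isOpen_iInter_of_finite fun i =>
    (isOpen_discrete {w.get i}).preimage (continuous_apply (A := fun _ => A) _)

variable [TopologicalSpace A] {Ω : Set (ℤ → A)}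

lemma IsSubshift.shiftZ_mem (hΩ : IsSubshift Ω) (n : ℤ) {ω : ℤ → A} (hω : ω ∈ Ω) :
    shiftZ n ω ∈ Ω := by
  induction n using Int.induction_on with
  | zero => rwa [shiftZ_zero]
  | succ k ih =>
    rw [← shiftZ_shiftZ, ← hΩ.2]
    exact Set.mem_image_of_mem shift ih
  | pred k ih =>
    rw [← hΩ.2] at ih
    obtain ⟨τ, hτ, hτk⟩ := ih
    rwa [sub_eq_add_neg, ← shiftZ_shiftZ, ← hτk, show shift τ = shiftZ 1 τ from rfl,
      shiftZ_shiftZ, add_neg_cancel, shiftZ_zero]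

/-- Compactness turns "`w` occurs somewhere in every `σ ∈ Ω`" into "`w` occurs in every
`σ ∈ Ω` at a position `≥ -M`" for a single `M`; shifting `ω` by `M` then gives `k ≥ 0`. -/
lemma exists_occursAt_natCast [DiscreteTopology A] [Finite A] (hΩ : IsSubshift Ω)
    (hmin : IsMinimal Ω) {w : List A} (hw : w ∈ words Ω) {ω : ℤ → A} (hω : ω ∈ Ω) :
    ∃ k : ℕ, OccursAt w ω k := by
  obtain ⟨ρ, hρ, m, hm⟩ := hw
  let U : ℕ → Set (ℤ → A) := fun M => ⋃ (n : ℤ) (_ : -(M : ℤ) ≤ n), {σ | OccursAt w σ n}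
  have hcover : Ω ⊆ ⋃ M, U M := by
    intro σ hσ
    have hρσ := hmin σ hσ (hΩ.shiftZ_mem m hρ)
    obtain ⟨_, hτ, n, rfl⟩ := mem_closure_iff.mp hρσ _ (isOpen_setOf_occursAt w 0)
      (occursAt_shiftZ.mpr (by rwa [zero_add]))
    rw [Set.mem_ofPred_eq, occursAt_shiftZ, zero_add] at hτ
    exact Set.mem_iUnion.mpr ⟨n.natAbs, Set.mem_iUnion₂.mpr ⟨n, by omega, hτ⟩⟩
  have hmono : Monotone U := fun M M' hM =>
    Set.biUnion_mono (fun n (hn : -(M : ℤ) ≤ n) => show -(M' : ℤ) ≤ n by omega) fun _ _ => le_rfl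
  obtain ⟨M, hM⟩ := hΩ.1.isCompact.elim_directed_cover U
    (fun M => isOpen_biUnion fun n _ => isOpen_setOf_occursAt w n) hcover hmono.directed_le
  obtain ⟨n, hn, hocc⟩ := Set.mem_iUnion₂.mp (hM (hΩ.shiftZ_mem M hω))
  exact ⟨(n + M).toNat, by rw [Int.toNat_of_nonneg (by omega)]; exact occursAt_shiftZ.mp hocc⟩

lemma occursAt_firstOcc [DiscreteTopology A] [Finite A] (hΩ : IsSubshift Ω)
    (hmin : IsMinimal Ω) {w : List A} (hw : w ∈ words Ω) {ω : ℤ → A} (hω : ω ∈ Ω) :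
    OccursAt w ω (firstOcc ω w) :=
  Nat.sInf_mem (exists_occursAt_natCast hΩ hmin hw hω)

end Shift

/-- The closed sets of pairs agreeing on `[-N, N]` decrease to the diagonal, which misses the
compact set of pairs with `dist (f x) (f y) ≥ ε`. -/
lemma _root_.IsCompact.exists_eqOn_Icc_dist_lt [TopologicalSpace A] [T2Space A] {Ω : Set (ℤ → A)}
    (hΩ : IsCompact Ω) {X : Type*} [PseudoMetricSpace X] {f : (ℤ → A) → X}
    (hf : ContinuousOn f Ω) {ε : ℝ} (hε : 0 < ε) :
    ∃ N : ℕ, ∀ x ∈ Ω, ∀ y ∈ Ω, Set.EqOn x y (Set.Icc (-(N : ℤ)) N) → dist (f x) (f y) < ε := by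
  let far : Set ((ℤ → A) × (ℤ → A)) :=
    Ω ×ˢ Ω ∩ (fun p => dist (f p.1) (f p.2)) ⁻¹' Set.Ici ε
  let agree : ℕ → Set ((ℤ → A) × (ℤ → A)) := fun N => {p | Set.EqOn p.1 p.2 (Set.Icc (-(N : ℤ)) N)}
  have hfar : IsCompact far := by
    have hcont : ContinuousOn (fun p : (ℤ → A) × (ℤ → A) => dist (f p.1) (f p.2)) (Ω ×ˢ Ω) :=
      continuous_dist.comp_continuousOn (hf.prodMap hf)
    exact (hΩ.prod hΩ).of_isClosed_subset
      (hcont.preimage_isClosed_of_isClosed (hΩ.prod hΩ).isClosed isClosed_Ici) Set.inter_subset_left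
  have hagree : ∀ N, IsClosed (agree N) := fun N => by
    simp only [agree, Set.EqOn, Set.ofPred_forall]
    exact isClosed_iInter fun i => isClosed_iInter fun _ =>
      isClosed_eq ((continuous_apply i).comp continuous_fst)
        ((continuous_apply i).comp continuous_snd)
  have hdiag : far ∩ ⋂ N, agree N = ∅ := by
    refine Set.eq_empty_of_forall_notMem fun p ⟨⟨_, hp⟩, hpN⟩ => ?_
    have hxy : p.1 = p.2 := funext fun i =>
      Set.mem_iInter.mp hpN i.natAbs ⟨by omega, by omega⟩
    simp only [Set.mem_preimage, Set.mem_Ici, hxy, dist_self] at hp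
    linarith
  have hanti : Antitone agree := fun M N hMN p hp i hi =>
    hp ⟨by have := hi.1; omega, by have := hi.2; omega⟩
  obtain ⟨N, hN⟩ := hfar.elim_directed_family_closed agree hagree hdiag hanti.directed_ge
  refine ⟨N, fun x hx y hy hxy => not_le.mp fun hle => ?_⟩
  exact (Set.eq_empty_iff_forall_notMem.mp hN) (x, y) ⟨⟨⟨hx, hy⟩, hle⟩, hxy⟩

lemma eqOn_shiftZ_of_occursAt {w : List A} {ω ρ : ℤ → A} {k k' : ℤ} (hω : OccursAt w ω k)
    (hρ : OccursAt w ρ k') {N j : ℕ} (hjN : N ≤ j) (hjw : j + N < w.length) :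
    Set.EqOn (shiftZ (k + j) ω) (shiftZ (k' + j) ρ) (Set.Icc (-(N : ℤ)) N) := fun i hi => by
  have := hω.apply_eq hρ (m := j + i) (by have := hi.1; omega) (by have := hi.2; omega)
  simpa only [shiftZ, add_comm i, add_assoc] using this

lemma norm_sum_range_le_of_interior {E : Type*} [SeminormedAddCommGroup E] {g : ℕ → E}
    {n N : ℕ} {δ C : ℝ} (hδ₀ : 0 ≤ δ) (hC : ∀ j, ‖g j‖ ≤ C)
    (hδ : ∀ j, N ≤ j → j + N < n → ‖g j‖ ≤ δ) :
    ‖∑ j ∈ Finset.range n, g j‖ ≤ n * δ + 2 * N * C := by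
  classical
  let boundary := Finset.range N ∪ Finset.Ico (n - N) n
  have hC₀ : 0 ≤ C := (norm_nonneg _).trans (hC 0)
  have hpt : ∀ j ∈ Finset.range n, ‖g j‖ ≤ δ + if j ∈ boundary then C else 0 := by
    intro j hjn
    by_cases hj : j ∈ boundary
    · simp only [hj, if_true]
      linarith [hC j]
    · simp only [hj, if_false, add_zero]
      simp only [boundary, Finset.mem_union, Finset.mem_range, Finset.mem_Ico] at hj hjn
      exact hδ j (by omega) (by omega)
  have hcard : boundary.card ≤ 2 * N :=
    (Finset.card_union_le _ _).trans (by simp only [Finset.card_range, Nat.card_Ico]; omega)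
  calc ‖∑ j ∈ Finset.range n, g j‖
      ≤ ∑ j ∈ Finset.range n, (δ + if j ∈ boundary then C else 0) :=
        (norm_sum_le _ _).trans (Finset.sum_le_sum hpt)
    _ ≤ n * δ + boundary.card * C := by
        rw [Finset.sum_add_distrib, Finset.sum_const, Finset.card_range, nsmul_eq_mul,
          Finset.sum_ite_mem, Finset.sum_const, nsmul_eq_mul]
        gcongr
        exact Finset.inter_subset_right
    _ ≤ n * δ + 2 * N * C := by gcongr; exact_mod_cast hcard

lemma norm_birkhoffF_sub_le [TopologicalSpace A] [DiscreteTopology A] [Finite A]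
    {Ω : Set (ℤ → A)} (hΩ : IsSubshift Ω) (hmin : IsMinimal Ω) {E : Type*}
    [SeminormedAddCommGroup E] {f : (ℤ → A) → E} {N : ℕ} {δ D : ℝ}
    (hN : ∀ x ∈ Ω, ∀ y ∈ Ω, Set.EqOn x y (Set.Icc (-(N : ℤ)) N) → ‖f x - f y‖ ≤ δ)
    (hD : ∀ x ∈ Ω, ‖f x‖ ≤ D) {ω ρ : ℤ → A} (hω : ω ∈ Ω) (hρ : ρ ∈ Ω) {w : List A}
    (hw : w ∈ words Ω) :
    ‖birkhoffF f ω w - birkhoffF f ρ w‖ ≤ w.length * δ + 2 * N * (2 * D) := by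
  have hδ₀ : 0 ≤ δ := by simpa using hN ω hω ω hω fun _ _ => rfl
  have hkω := occursAt_firstOcc hΩ hmin hw hω
  have hkρ := occursAt_firstOcc hΩ hmin hw hρ
  rw [birkhoffF, birkhoffF, ← Finset.sum_sub_distrib]
  refine norm_sum_range_le_of_interior hδ₀ (fun j => ?_) fun j hjN hjw =>
    hN _ (hΩ.shiftZ_mem _ hω) _ (hΩ.shiftZ_mem _ hρ) (eqOn_shiftZ_of_occursAt hkω hkρ hjN hjw)
  linarith [norm_sub_le (f (shiftZ (firstOcc ω w + j) ω)) (f (shiftZ (firstOcc ρ w + j) ρ)),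
    hD _ (hΩ.shiftZ_mem (firstOcc ω w + j) hω), hD _ (hΩ.shiftZ_mem (firstOcc ρ w + j) hρ)]

theorem birkhoffF_uniformly_close_general
    {A : Type*} [Fintype A] [TopologicalSpace A] [DiscreteTopology A]
    (Ω : Set (ℤ → A)) (hΩ : IsSubshift Ω) (hmin : IsMinimal Ω)
    (B : Type*) [NormedAddCommGroup B]
    (f : (ℤ → A) → B) (hf : ContinuousOn f Ω) :
    ∀ ε : ℝ, 0 < ε → ∃ l : ℕ, ∀ ω ∈ Ω, ∀ ρ ∈ Ω, ∀ w ∈ words Ω, l ≤ w.length →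
      ‖birkhoffF f ω w - birkhoffF f ρ w‖ ≤ ε * (w.length : ℝ) := by
  intro ε hε
  obtain ⟨N, hN⟩ := hΩ.1.isCompact.exists_eqOn_Icc_dist_lt hf (half_pos hε)
  obtain ⟨D, hD⟩ := hΩ.1.isCompact.exists_bound_of_continuousOn hf
  obtain ⟨l, hl⟩ := exists_nat_ge (8 * D * N / ε)
  refine ⟨l, fun ω hω ρ hρ w hw hlw => ?_⟩
  have hdiff := norm_birkhoffF_sub_le hΩ hmin
    (fun x hx y hy hxy => (dist_eq_norm (f x) (f y)) ▸ (hN x hx y hy hxy).le) hD hω hρ hw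
  have hlong : 8 * D * N ≤ ε * w.length :=
    ((div_le_iff₀' hε).mp hl).trans (mul_le_mul_of_nonneg_left (Nat.cast_le.mpr hlw) hε.le)
  linarith

/-- on a minimal subshift, the functions `F_ω(w) = ∑_{j<|w|} f(T^{k_ω^w+j} ω)`
built from a continuous `f` are uniformly close to each other: for every `ε > 0` there is
`l` with `‖F_ω(w) - F_ρ(w)‖ ≤ ε|w|` whenever `|w| ≥ l`. -/
theorem birkhoffF_uniformly_close
    {A : Type*} [Fintype A] [Nonempty A] [TopologicalSpace A] [DiscreteTopology A]
    (Ω : Set (ℤ → A)) (hΩ : IsSubshift Ω) (hne : Ω.Nonempty) (hmin : IsMinimal Ω)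
    (B : Type*) [NormedAddCommGroup B] [NormedSpace ℝ B] [CompleteSpace B]
    (f : (ℤ → A) → B) (hf : ContinuousOn f Ω) :
    ∀ ε : ℝ, 0 < ε → ∃ l : ℕ, ∀ ω ∈ Ω, ∀ ρ ∈ Ω, ∀ w ∈ words Ω, l ≤ w.length →
      ‖birkhoffF f ω w - birkhoffF f ρ w‖ ≤ ε * (w.length : ℝ) :=
  birkhoffF_uniformly_close_general Ω hΩ hmin B f hf

end SubshiftErgodic
end
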